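/- arXiv:2402.05864 — 12 statements merged into one kernel-verified Lean document; each statement's English description precedes it below -/
import Mathlib

section
/- Let V be a nonempty finite vocabulary, T > 0, and δ ≥ 0. For any logits functions u, ũ : V → ℝ with ‖ũ − u‖_∞ ≤ δ and every y ∈ V, the softmax probabilities satisfy |log( Softmax_T(ũ)(y) / Softmax_T(u)(y) )| ≤ (2/T)·δ. That is, softmax sampling with temperature T is (2/T)-stable. -/
open Finset

/-- The softmax distribution with temperature `T` for logits `u`. -/
noncomputable def softmax {V : Type*} [Fintype V] (T : ℝ) (u : V → ℝ) (y : V) : ℝ :=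
  Real.exp (u y / T) / ∑ z : V, Real.exp (u z / T)

/-- Softmax sampling with temperature `T` is `(2/T)`-stable: if `‖v − u‖_∞ ≤ δ` then
the log-probability ratio of the softmax distributions is at most `(2/T)·δ` at every token. -/
theorem softmax_stability {V : Type*} [Fintype V] [Nonempty V]
    (T δ : ℝ) (hT : 0 < T) (hδ : 0 ≤ δ)
    (u v : V → ℝ) (h : ∀ y : V, |v y - u y| ≤ δ) (y : V) :
    |Real.log (softmax T v y / softmax T u y)| ≤ (2 / T) * δ := by
  have key : ∀ (a b : V → ℝ), (∀ z, |b z - a z| ≤ δ) →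
      (∑ z : V, Real.exp (b z / T)) ≤ Real.exp (δ / T) * ∑ z : V, Real.exp (a z / T) := by
    intro a b hab
    rw [Finset.mul_sum]
    apply Finset.sum_le_sum
    intro z _
    rw [← Real.exp_add]
    apply Real.exp_le_exp.2
    have h1 := abs_le.1 (hab z)
    have h2 : b z ≤ δ + a z := by linarith [h1.2]
    have h3 : b z / T ≤ (δ + a z) / T := div_le_div_of_nonneg_right h2 hT.le
    rwa [add_div] at h3
  have hSu : 0 < ∑ z : V, Real.exp (u z / T) :=
    Finset.sum_pos (fun _ _ => Real.exp_pos _) Finset.univ_nonempty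
  have hSv : 0 < ∑ z : V, Real.exp (v z / T) :=
    Finset.sum_pos (fun _ _ => Real.exp_pos _) Finset.univ_nonempty
  have hvu := key u v h
  have huv := key v u (fun z => by rw [abs_sub_comm]; exact h z)
  have hlog1 : Real.log (∑ z : V, Real.exp (v z / T)) ≤
      δ / T + Real.log (∑ z : V, Real.exp (u z / T)) := by
    calc Real.log (∑ z : V, Real.exp (v z / T))
        ≤ Real.log (Real.exp (δ / T) * ∑ z : V, Real.exp (u z / T)) :=
          Real.log_le_log hSv hvu
      _ = δ / T + Real.log (∑ z : V, Real.exp (u z / T)) := by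
          rw [Real.log_mul (Real.exp_ne_zero _) hSu.ne', Real.log_exp]
  have hlog2 : Real.log (∑ z : V, Real.exp (u z / T)) ≤
      δ / T + Real.log (∑ z : V, Real.exp (v z / T)) := by
    calc Real.log (∑ z : V, Real.exp (u z / T))
        ≤ Real.log (Real.exp (δ / T) * ∑ z : V, Real.exp (v z / T)) :=
          Real.log_le_log hSu huv
      _ = δ / T + Real.log (∑ z : V, Real.exp (v z / T)) := by
          rw [Real.log_mul (Real.exp_ne_zero _) hSv.ne', Real.log_exp]
  have heq : Real.log (softmax T v y / softmax T u y) =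
      (v y / T - u y / T) -
        (Real.log (∑ z : V, Real.exp (v z / T)) - Real.log (∑ z : V, Real.exp (u z / T))) := by
    unfold softmax
    rw [Real.log_div (div_ne_zero (Real.exp_ne_zero _) hSv.ne')
        (div_ne_zero (Real.exp_ne_zero _) hSu.ne'),
      Real.log_div (Real.exp_ne_zero _) hSv.ne',
      Real.log_div (Real.exp_ne_zero _) hSu.ne', Real.log_exp, Real.log_exp]
    ring
  have habs := abs_le.1 (h y)
  have hd1 : v y / T - u y / T ≤ δ / T := by
    rw [div_sub_div_same]
    exact div_le_div_of_nonneg_right habs.2 hT.le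
  have hd2 : -(δ / T) ≤ v y / T - u y / T := by
    rw [div_sub_div_same, ← neg_div]
    exact div_le_div_of_nonneg_right habs.1 hT.le
  rw [heq]
  rw [abs_le]
  constructor
  · have : (2 / T) * δ = δ / T + δ / T := by field_simp; ring
    rw [this]; linarith
  · have : (2 / T) * δ = δ / T + δ / T := by field_simp; ring
    rw [this]; linarith
end

section
/- Let V be a nonempty finite vocabulary and let A be a decoder that is L-stable and permutation-equivariant, i.e., A(u ∘ σ)(y) = A(u)(σ(y)) for every permutation σ of V. Then for any logits u : V → ℝ and any two tokens y, y' ∈ V with |u(y) − u(y')| ≤ δ, the output probabilities satisfy |log( A(u)(y) / A(u)(y') )| ≤ Lδ (stability implies diversity). -/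
open Finset

/-- A decoder assigns to each logits vector a probability distribution on `V`. -/
def IsDecoder {V : Type*} [Fintype V] (A : (V → ℝ) → V → ℝ) : Prop :=
  ∀ u : V → ℝ, (∀ y : V, 0 ≤ A u y) ∧ (∑ y : V, A u y = 1)

/-- `A` is `L`-stable: perturbing the logits by at most `δ` in sup-norm changes the
log-probability of every token by at most `L·δ`. -/
def IsStable {V : Type*} [Fintype V] (L : ℝ) (A : (V → ℝ) → V → ℝ) : Prop :=
  ∀ δ : ℝ, 0 ≤ δ → ∀ u v : V → ℝ, (∀ y : V, |v y - u y| ≤ δ) →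
    ∀ y : V, |Real.log (A v y / A u y)| ≤ L * δ

/-- `A` is permutation-equivariant: `A (u ∘ σ) y = A u (σ y)` for every permutation `σ`. -/
def IsPermEquivariant {V : Type*} [Fintype V] (A : (V → ℝ) → V → ℝ) : Prop :=
  ∀ (σ : Equiv.Perm V) (u : V → ℝ) (y : V), A (u ∘ σ) y = A u (σ y)

/-- Stability implies diversity: if `A` is an `L`-stable permutation-equivariant decoder and
two tokens have logits within `δ` of each other, their output probabilities have
log-ratio at most `L·δ`. -/
theorem stability_implies_diversity {V : Type*} [Fintype V] [Nonempty V]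
    (L : ℝ) (A : (V → ℝ) → V → ℝ)
    (hA : IsDecoder A) (hstab : IsStable L A) (hperm : IsPermEquivariant A)
    (u : V → ℝ) (y y' : V) (δ : ℝ) (h : |u y - u y'| ≤ δ) :
    |Real.log (A u y / A u y')| ≤ L * δ := by
  classical
  have hδ : 0 ≤ δ := le_trans (abs_nonneg _) h
  have hclose : ∀ z : V, |(u ∘ Equiv.swap y y') z - u z| ≤ δ := by
    intro z
    rcases eq_or_ne z y with rfl | hzy
    · simpa [Equiv.swap_apply_left, abs_sub_comm] using h
    rcases eq_or_ne z y' with rfl | hzy'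
    · simpa [Equiv.swap_apply_right] using h
    · simp [Equiv.swap_apply_of_ne_of_ne hzy hzy', hδ]
  have := hstab δ hδ u (u ∘ Equiv.swap y y') hclose y'
  rwa [hperm (Equiv.swap y y') u y', Equiv.swap_apply_right] at this
end

section
/- Gumbel-max trick: let V be a nonempty finite vocabulary, u : V → ℝ logits, T > 0, and let (r_y)_{y∈V} be i.i.d. Uniform(0,1) random variables. Then the random token ŷ = argmax_{y∈V} ( u(y)/T − log log(1/r_y) ) is almost surely well defined (the argmax is a.s. unique), and for every w ∈ V, P(ŷ = w) = exp(u(w)/T) / Σ_{ỹ∈V} exp(u(ỹ)/T), i.e., ŷ is distributed according to Softmax_T(u). -/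
open Finset MeasureTheory
open scoped ENNReal

/-- The law of a family of i.i.d. `Uniform(0,1)` random variables indexed by `V`,
as a product measure on `V → ℝ`. -/
noncomputable def unifPi (V : Type*) [Fintype V] : Measure (V → ℝ) :=
  Measure.pi fun _ : V => volume.restrict (Set.Ioo (0 : ℝ) 1)

private lemma gm_mem_iff {d s t : ℝ} (hs : s ∈ Set.Ioo (0:ℝ) 1) (ht : t ∈ Set.Ioo (0:ℝ) 1) :
    d - Real.log (Real.log (1 / s)) < - Real.log (Real.log (1 / t)) ↔
      s < t ^ Real.exp d := by
  obtain ⟨hs0, hs1⟩ := hs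
  obtain ⟨ht0, ht1⟩ := ht
  have hls : 0 < -Real.log s := by have := Real.log_neg hs0 hs1; linarith
  have hlt : 0 < -Real.log t := by have := Real.log_neg ht0 ht1; linarith
  rw [one_div, one_div, Real.log_inv, Real.log_inv]
  have h1 : d - Real.log (-Real.log s) < -Real.log (-Real.log t) ↔
      d + Real.log (-Real.log t) < Real.log (-Real.log s) := by constructor <;> intro <;> linarith
  have h2 : d + Real.log (-Real.log t) = Real.log (Real.exp d * (-Real.log t)) := by
    rw [Real.log_mul (Real.exp_ne_zero d) (ne_of_gt hlt), Real.log_exp]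
  have h3 : Real.log (Real.exp d * (-Real.log t)) < Real.log (-Real.log s) ↔
      Real.exp d * (-Real.log t) < -Real.log s :=
    Real.log_lt_log_iff (by positivity) hls
  have h4 : Real.exp d * (-Real.log t) < -Real.log s ↔
      Real.log s < Real.log t * Real.exp d := by constructor <;> intro <;> nlinarith
  have h5 : Real.log s < Real.log t * Real.exp d ↔ s < t ^ Real.exp d := by
    rw [Real.rpow_def_of_pos ht0, ← Real.exp_lt_exp, Real.exp_log hs0]
  rw [h1, h2, h3, h4, h5]

private lemma gm_nu (d : ℝ) {t : ℝ} (ht : t ∈ Set.Ioo (0:ℝ) 1) :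
    (volume.restrict (Set.Ioo (0:ℝ) 1))
        {s : ℝ | d - Real.log (Real.log (1 / s)) < - Real.log (Real.log (1 / t))}
      = ENNReal.ofReal (t ^ Real.exp d) := by
  rw [Measure.restrict_apply' measurableSet_Ioo]
  have hset : {s : ℝ | d - Real.log (Real.log (1 / s)) < - Real.log (Real.log (1 / t))}
      ∩ Set.Ioo 0 1 = Set.Ioo 0 (t ^ Real.exp d) := by
    have htp1 : t ^ Real.exp d < 1 := by
      rw [Real.rpow_def_of_pos ht.1, ← Real.exp_zero, Real.exp_lt_exp]
      have := Real.log_neg ht.1 ht.2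
      nlinarith [Real.exp_pos d]
    ext s
    simp only [Set.mem_inter_iff, Set.mem_setOf_eq, Set.mem_Ioo]
    constructor
    · rintro ⟨hc, hs0, hs1⟩
      exact ⟨hs0, (gm_mem_iff ⟨hs0, hs1⟩ ht).1 hc⟩
    · rintro ⟨hs0, hst⟩
      have hs1 : s < 1 := lt_trans hst htp1
      exact ⟨(gm_mem_iff ⟨hs0, hs1⟩ ht).2 hst, hs0, hs1⟩
  rw [hset, Real.volume_Ioo, sub_zero]

private lemma gm_lintegral_pi_unique {ι : Type*} [Fintype ι] [Unique ι] (ν : Measure ℝ)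
    [SigmaFinite ν] (g : (ι → ℝ) → ℝ≥0∞) :
    ∫⁻ x, g x ∂(Measure.pi fun _ : ι => ν) = ∫⁻ s, g (fun _ => s) ∂ν := by
  have hpi : (Measure.pi fun _ : ι => ν)
      = @Measure.pi ι (fun _ => ℝ) Unique.fintype _ (fun _ => ν) :=
    congrArg (fun f : Fintype ι => @Measure.pi ι (fun _ => ℝ) f _ fun _ => ν)
      (Subsingleton.elim _ _)
  rw [hpi]
  have mpu : MeasurePreserving (MeasurableEquiv.funUnique ι ℝ)
      (@Measure.pi ι (fun _ => ℝ) Unique.fintype _ (fun _ => ν)) ν :=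
    measurePreserving_funUnique ν ι
  rw [← mpu.lintegral_comp_emb (MeasurableEquiv.funUnique ι ℝ).measurableEmbedding
    (fun s => g fun _ => s)]
  refine lintegral_congr fun x => ?_
  have : (fun _ : ι => MeasurableEquiv.funUnique ι ℝ x) = x := by
    funext i
    have hi : i = default := Unique.uniq _ i
    rw [hi]; rfl
  rw [this]

private lemma gm_measure {V : Type*} [Fintype V] [Nonempty V]
    (u : V → ℝ) (T : ℝ) (hT : 0 < T) (w : V) :
    unifPi V {r : V → ℝ | ∀ y : V, y ≠ w →
        u y / T - Real.log (Real.log (1 / r y)) < u w / T - Real.log (Real.log (1 / r w))}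
      = ENNReal.ofReal (Real.exp (u w / T) / ∑ z : V, Real.exp (u z / T)) := by
  classical
  set ν : Measure ℝ := volume.restrict (Set.Ioo (0:ℝ) 1) with hν
  haveI : IsProbabilityMeasure ν := ⟨by
    rw [hν, Measure.restrict_apply_univ, Real.volume_Ioo, sub_zero, ENNReal.ofReal_one]⟩
  set p : V → Prop := fun y => y = w with hp
  haveI hu : Unique {y : V // p y} := ⟨⟨⟨w, rfl⟩⟩, fun a => Subtype.ext a.2⟩
  set e := MeasurableEquiv.piEquivPiSubtypeProd (fun _ : V => ℝ) p with he
  have mp := measurePreserving_piEquivPiSubtypeProd (fun _ : V => ν) p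
  set μ₂ : Measure ({y : V // ¬ p y} → ℝ) := Measure.pi fun _ => ν with hμ₂
  set S : Set (V → ℝ) := {r | ∀ y : V, y ≠ w →
      u y / T - Real.log (Real.log (1 / r y)) < u w / T - Real.log (Real.log (1 / r w))}
    with hSdef
  have hmf : ∀ y : V, Measurable fun r : V → ℝ =>
      u y / T - Real.log (Real.log (1 / r y)) := by
    intro y
    exact measurable_const.sub (Real.measurable_log.comp (Real.measurable_log.comp
      (measurable_const.div (measurable_pi_apply y))))
  have hS : MeasurableSet S := by
    have : S = ⋂ y : V, ⋂ (_ : y ≠ w), {r : V → ℝ |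
        u y / T - Real.log (Real.log (1 / r y)) < u w / T - Real.log (Real.log (1 / r w))} := by
      ext r; simp [hSdef, Set.mem_iInter]
    rw [this]
    exact MeasurableSet.iInter fun y => MeasurableSet.iInter fun _ =>
      measurableSet_lt (hmf y) (hmf w)
  have hB : MeasurableSet (e.symm ⁻¹' S) := e.symm.measurable hS
  set P : ℝ := ∑ i : {y : V // ¬ p y}, Real.exp (u i.1 / T - u w / T) with hP
  have hP0 : 0 ≤ P := Finset.sum_nonneg fun i _ => (Real.exp_pos _).le
  -- symm-evaluations
  have hvw : ∀ (x : {y : V // p y} → ℝ) (z : {y : V // ¬ p y} → ℝ),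
      e.symm (x, z) w = x ⟨w, rfl⟩ := by
    intro x z
    simp only [he, MeasurableEquiv.piEquivPiSubtypeProd_symm_apply]
    rw [dif_pos rfl]
  have hvy : ∀ (x : {y : V // p y} → ℝ) (z : {y : V // ¬ p y} → ℝ) (y : V) (h : ¬ p y),
      e.symm (x, z) y = z ⟨y, h⟩ := by
    intro x z y h
    simp only [he, MeasurableEquiv.piEquivPiSubtypeProd_symm_apply]
    rw [dif_neg h]
  -- Claim A
  have claimA : ∀ x : {y : V // p y} → ℝ, x ⟨w, rfl⟩ ∈ Set.Ioo (0:ℝ) 1 →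
      μ₂ (Prod.mk x ⁻¹' (e.symm ⁻¹' S)) = ENNReal.ofReal ((x ⟨w, rfl⟩) ^ P) := by
    intro x hx
    set t : ℝ := x ⟨w, rfl⟩ with htdef
    have hset : Prod.mk x ⁻¹' (e.symm ⁻¹' S) = Set.pi Set.univ
        (fun i : {y : V // ¬ p y} => {s : ℝ |
          (u i.1 / T - u w / T) - Real.log (Real.log (1 / s))
            < - Real.log (Real.log (1 / t))}) := by
      ext z
      simp only [Set.mem_preimage, hSdef, Set.mem_setOf_eq, Set.mem_univ_pi]
      constructor
      · intro hcond i
        have h := hcond i.1 i.2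
        rw [hvw x z, hvy x z i.1 i.2, Subtype.eta] at h
        show (u i.1 / T - u w / T) - Real.log (Real.log (1 / z i))
          < - Real.log (Real.log (1 / t))
        linarith
      · intro hcond y hy
        have h := hcond ⟨y, hy⟩
        simp only [Set.mem_setOf_eq] at h
        rw [hvw x z, hvy x z y hy]
        linarith
    rw [hset, hμ₂, Measure.pi_pi]
    have hfac : ∀ i : {y : V // ¬ p y}, ν {s : ℝ |
        (u i.1 / T - u w / T) - Real.log (Real.log (1 / s))
          < - Real.log (Real.log (1 / t))}
        = ENNReal.ofReal (t ^ Real.exp (u i.1 / T - u w / T)) :=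
      fun i => gm_nu _ hx
    rw [Finset.prod_congr rfl fun i _ => hfac i,
      ← ENNReal.ofReal_prod_of_nonneg (fun i _ => Real.rpow_nonneg hx.1.le _),
      ← Real.rpow_sum_of_pos hx.1]
  -- main chain
  have h0 : unifPi V S = Measure.map e (Measure.pi fun _ : V => ν) (e.symm ⁻¹' S) := by
    rw [Measure.map_apply e.measurable hB]
    congr 1
    ext r
    simp
  rw [h0, mp.map_eq, Measure.prod_apply hB,
    @gm_lintegral_pi_unique (Subtype p) (Subtype.fintype p) hu ν _
      (fun x => μ₂ (Prod.mk x ⁻¹' (e.symm ⁻¹' S))), hν]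
  have hstep : ∫⁻ s in Set.Ioo (0:ℝ) 1, μ₂ (Prod.mk (fun _ => s) ⁻¹' (e.symm ⁻¹' S))
      = ∫⁻ s in Set.Ioo (0:ℝ) 1, ENNReal.ofReal (s ^ P) := by
    refine setLIntegral_congr_fun measurableSet_Ioo (fun s hs => ?_)
    exact claimA (fun _ => s) hs
  rw [hstep]
  have hint : IntegrableOn (fun s : ℝ => s ^ P) (Set.Ioo (0:ℝ) 1) :=
    ((intervalIntegral.intervalIntegrable_rpow (Or.inl hP0)).1).mono_set Set.Ioo_subset_Ioc_self
  have hnn : 0 ≤ᵐ[volume.restrict (Set.Ioo (0:ℝ) 1)] fun s : ℝ => s ^ P := by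
    filter_upwards [ae_restrict_mem measurableSet_Ioo] with s hs
    exact Real.rpow_nonneg hs.1.le _
  rw [← ofReal_integral_eq_lintegral_ofReal hint hnn]
  have hival : ∫ s in Set.Ioo (0:ℝ) 1, s ^ P = 1 / (P + 1) := by
    rw [← integral_Ioc_eq_integral_Ioo, ← intervalIntegral.integral_of_le zero_le_one,
      integral_rpow (Or.inl (by linarith : (-1:ℝ) < P)), Real.one_rpow,
      Real.zero_rpow (by linarith), sub_zero]
  rw [hival]
  congr 1
  have hsub : P = ∑ z ∈ univ.erase w, Real.exp (u z / T - u w / T) := by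
    rw [hP]
    exact (Finset.sum_subtype (p := fun y => ¬ p y) (univ.erase w)
      (fun x => by simp [hp]) (fun z => Real.exp (u z / T - u w / T))).symm
  have hPsum : P + 1 = (∑ z : V, Real.exp (u z / T)) / Real.exp (u w / T) := by
    have h1 : P + 1 = ∑ z : V, Real.exp (u z / T - u w / T) := by
      rw [hsub, ← Real.exp_zero, ← sub_self (u w / T),
        Finset.sum_erase_add univ _ (mem_univ w)]
    rw [h1]
    simp_rw [Real.exp_sub, ← Finset.sum_div]
  rw [hPsum, one_div_div]

/-- Gumbel-max trick: with `(r y)` i.i.d. uniform on `(0,1)`, the perturbed argmax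
`ŷ = argmax_y (u y / T − log log (1 / r y))` is almost surely unique, and for every `w`
it equals `w` with probability `Softmax_T(u)(w)`. -/
theorem gumbel_max_trick {V : Type*} [Fintype V] [Nonempty V]
    (u : V → ℝ) (T : ℝ) (hT : 0 < T) :
    (unifPi V {r : V → ℝ | ∃! w : V, ∀ y : V, y ≠ w →
        u y / T - Real.log (Real.log (1 / r y)) < u w / T - Real.log (Real.log (1 / r w))}
      = 1) ∧
    (∀ w : V,
      unifPi V {r : V → ℝ | ∀ y : V, y ≠ w →
          u y / T - Real.log (Real.log (1 / r y)) < u w / T - Real.log (Real.log (1 / r w))}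
        = ENNReal.ofReal (Real.exp (u w / T) / ∑ z : V, Real.exp (u z / T))) := by

  classical
  refine ⟨?_, fun w => gm_measure u T hT w⟩
  set S : V → Set (V → ℝ) := fun w => {r | ∀ y : V, y ≠ w →
      u y / T - Real.log (Real.log (1 / r y)) < u w / T - Real.log (Real.log (1 / r w))}
    with hSdef
  have hmf : ∀ y : V, Measurable fun r : V → ℝ =>
      u y / T - Real.log (Real.log (1 / r y)) := by
    intro y
    exact measurable_const.sub (Real.measurable_log.comp (Real.measurable_log.comp
      (measurable_const.div (measurable_pi_apply y))))
  have hSm : ∀ w : V, MeasurableSet (S w) := by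
    intro w
    have : S w = ⋂ y : V, ⋂ (_ : y ≠ w), {r : V → ℝ |
        u y / T - Real.log (Real.log (1 / r y)) < u w / T - Real.log (Real.log (1 / r w))} := by
      ext r; simp [hSdef, Set.mem_iInter]
    rw [this]
    exact MeasurableSet.iInter fun y => MeasurableSet.iInter fun _ =>
      measurableSet_lt (hmf y) (hmf w)
  have hdisj : Pairwise (Function.onFun Disjoint S) := by
    intro w w' hne
    rw [Function.onFun, Set.disjoint_left]
    intro r hrw hrw'
    have h1 := hrw w' (Ne.symm hne)
    have h2 := hrw' w hne
    exact absurd h1 (not_lt.mpr h2.le)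
  haveI : IsProbabilityMeasure (volume.restrict (Set.Ioo (0:ℝ) 1)) := ⟨by
    rw [Measure.restrict_apply_univ, Real.volume_Ioo, sub_zero, ENNReal.ofReal_one]⟩
  haveI : IsProbabilityMeasure (unifPi V) := by
    unfold unifPi; infer_instance
  have hA : 0 < ∑ z : V, Real.exp (u z / T) :=
    Finset.sum_pos (fun _ _ => Real.exp_pos _) univ_nonempty
  have hsum : unifPi V (⋃ w, S w) = 1 := by
    rw [measure_iUnion hdisj hSm, tsum_fintype]
    have : ∀ w : V, unifPi V (S w)
        = ENNReal.ofReal (Real.exp (u w / T) / ∑ z : V, Real.exp (u z / T)) :=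
      fun w => gm_measure u T hT w
    rw [Finset.sum_congr rfl fun w _ => this w,
      ← ENNReal.ofReal_sum_of_nonneg (fun i _ => by positivity),
      ← Finset.sum_div, div_self (ne_of_gt hA), ENNReal.ofReal_one]
  have hsub : (⋃ w, S w) ⊆ {r : V → ℝ | ∃! w : V, ∀ y : V, y ≠ w →
      u y / T - Real.log (Real.log (1 / r y)) < u w / T - Real.log (Real.log (1 / r w))} := by
    intro r hr
    obtain ⟨w, hw⟩ := Set.mem_iUnion.1 hr
    refine ⟨w, hw, ?_⟩
    intro w' hw'
    by_contra hne
    have h1 := hw w' hne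
    have h2 := hw' w (fun h => hne h.symm)
    exact absurd h1 (not_lt.mpr h2.le)
  refine le_antisymm prob_le_one ?_
  calc (1:ℝ≥0∞) = unifPi V (⋃ w, S w) := hsum.symm
    _ ≤ _ := measure_mono hsub
end

section
/- Report-noisy-max form of Permute-and-Flip: let V be a nonempty finite vocabulary, u : V → ℝ logits with u* = max_{y∈V} u(y), and let (r_y)_{y∈V} be i.i.d. Uniform(0,1) random variables. Then the random token ŷ = argmax_{y∈V} ( u(y) − log r_y ) is almost surely well defined, and for every w ∈ V, P(ŷ = w) = ∫₀^{exp(u(w) − u*)} ∏_{w'≠w} ( 1 − r · exp(u(w') − u(w)) ) dr. -/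
open Finset MeasureTheory


private lemma nu_prob : IsProbabilityMeasure (volume.restrict (Set.Ioo (0:ℝ) 1)) :=
  ⟨by simp [Real.volume_Ioo]⟩

private lemma pf_lt_iff (a b c d : ℝ) (ha : 0 < a) (hb : 0 < b) :
    c - Real.log a < d - Real.log b ↔ b * Real.exp (c - d) < a := by
  have h1 : c - Real.log a < d - Real.log b ↔ c - d < Real.log a - Real.log b := by
    constructor <;> intro <;> linarith
  rw [h1, ← Real.log_div ha.ne' hb.ne', Real.lt_log_iff_exp_lt (div_pos ha hb),
    lt_div_iff₀ hb, mul_comm]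

private lemma pf_eq_iff (a b c d : ℝ) (ha : 0 < a) (hb : 0 < b) :
    c - Real.log a = d - Real.log b ↔ a = b * Real.exp (c - d) := by
  have h1 : c - Real.log a = d - Real.log b ↔ Real.log a - Real.log b = c - d := by
    constructor <;> intro <;> linarith
  rw [h1, ← Real.log_div ha.ne' hb.ne']
  constructor
  · intro h
    have := Real.exp_log (div_pos ha hb)
    rw [h] at this
    field_simp at this
    linarith [this]
  · intro h
    rw [h, mul_comm, mul_div_assoc, div_self hb.ne', mul_one, Real.log_exp]

private lemma pf_box_one (V : Type*) [Fintype V] :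
    unifPi V (Set.univ.pi fun _ : V => Set.Ioo (0:ℝ) 1) = 1 := by
  rw [unifPi, Measure.pi_pi]
  simp [Measure.restrict_apply, Real.volume_Ioo]

private lemma pf_inter_box {V : Type*} [Fintype V] (S : Set (V → ℝ)) :
    unifPi V S = unifPi V (S ∩ Set.univ.pi fun _ : V => Set.Ioo (0:ℝ) 1) := by
  haveI := nu_prob
  haveI : IsProbabilityMeasure (unifPi V) := by rw [unifPi]; infer_instance
  have hbox : MeasurableSet (Set.univ.pi fun _ : V => Set.Ioo (0:ℝ) 1) :=
    MeasurableSet.univ_pi fun _ => measurableSet_Ioo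
  have hc : unifPi V (Set.univ.pi fun _ : V => Set.Ioo (0:ℝ) 1)ᶜ = 0 := by
    rw [measure_compl hbox (measure_ne_top _ _), pf_box_one, measure_univ, tsub_self]
  refine le_antisymm ?_ (measure_mono Set.inter_subset_left)
  calc unifPi V S ≤ unifPi V ((S ∩ Set.univ.pi fun _ : V => Set.Ioo (0:ℝ) 1) ∪
      (Set.univ.pi fun _ : V => Set.Ioo (0:ℝ) 1)ᶜ) := by
        refine measure_mono fun r hr => ?_
        by_cases h : r ∈ Set.univ.pi fun _ : V => Set.Ioo (0:ℝ) 1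
        · exact Or.inl ⟨hr, h⟩
        · exact Or.inr h
    _ ≤ unifPi V (S ∩ Set.univ.pi fun _ : V => Set.Ioo (0:ℝ) 1) +
        unifPi V (Set.univ.pi fun _ : V => Set.Ioo (0:ℝ) 1)ᶜ := measure_union_le _ _
    _ = unifPi V (S ∩ Set.univ.pi fun _ : V => Set.Ioo (0:ℝ) 1) := by rw [hc, add_zero]

private lemma pf_split' {V : Type*} [Fintype V] [DecidableEq V] (w : V)
    (A : Set (ℝ × ({y : V // ¬ y = w} → ℝ))) (hA : MeasurableSet A) :
    unifPi V {r : V → ℝ | (r w, fun j : {y : V // ¬ y = w} => r j) ∈ A}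
      = ∫⁻ t in Set.Ioo (0:ℝ) 1,
          Measure.pi (fun _ : {y : V // ¬ y = w} => volume.restrict (Set.Ioo (0:ℝ) 1))
            {x | (t, x) ∈ A} := by
  haveI := nu_prob
  letI : Unique {y : V // y = w} := ⟨⟨⟨w, rfl⟩⟩, fun a => Subtype.ext a.2⟩
  set ν := volume.restrict (Set.Ioo (0:ℝ) 1) with hν
  have h1 := measurePreserving_piEquivPiSubtypeProd (fun _ : V => ν) (fun y => y = w)
  have h2 : MeasurePreserving
      (Prod.map (MeasurableEquiv.funUnique {y : V // y = w} ℝ) (id : ({y : V // ¬ y = w} → ℝ) → _))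
      ((Measure.pi fun _ : {y : V // y = w} => ν).prod
        (Measure.pi fun _ : {y : V // ¬ y = w} => ν))
      (ν.prod (Measure.pi fun _ : {y : V // ¬ y = w} => ν)) :=
    (measurePreserving_funUnique ν _).prod (MeasurePreserving.id _)
  have h3 : MeasurePreserving
      ((Prod.map (MeasurableEquiv.funUnique {y : V // y = w} ℝ)
          (id : ({y : V // ¬ y = w} → ℝ) → _)) ∘
        (MeasurableEquiv.piEquivPiSubtypeProd (fun _ : V => ℝ) (fun y => y = w)))
      (Measure.pi fun _ : V => ν) (ν.prod (Measure.pi fun _ : {y : V // ¬ y = w} => ν)) := by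
    refine MeasurePreserving.comp ?_ h1
    convert h2 using 2
    congr!
  have hco : (Prod.map (MeasurableEquiv.funUnique {y : V // y = w} ℝ)
        (id : ({y : V // ¬ y = w} → ℝ) → _)) ∘
      (MeasurableEquiv.piEquivPiSubtypeProd (fun _ : V => ℝ) (fun y => y = w))
      = fun r : V → ℝ => (r w, fun j : {y : V // ¬ y = w} => r j) := by
    funext r
    simp [MeasurableEquiv.piEquivPiSubtypeProd, MeasurableEquiv.funUnique,
      Equiv.piEquivPiSubtypeProd, Equiv.funUnique, Prod.map]
    rfl
  rw [hco] at h3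
  have := h3.measure_preimage (s := A) hA.nullMeasurableSet
  rw [show (fun r : V → ℝ => (r w, fun j : {y : V // ¬ y = w} => r j)) ⁻¹' A
      = {r : V → ℝ | (r w, fun j : {y : V // ¬ y = w} => r j) ∈ A} from rfl] at this
  rw [show unifPi V = Measure.pi fun _ : V => ν from rfl, this, Measure.prod_apply hA]
  rfl

private lemma pf_integral {V : Type*} [Fintype V] [DecidableEq V] [Nonempty V]
    (u : V → ℝ) (w : V) :
    ∫⁻ t in Set.Ioo (0:ℝ) 1,
        ∏ y ∈ Finset.univ.erase w, ENNReal.ofReal (1 - t * Real.exp (u y - u w))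
      = ENNReal.ofReal
          (∫ r in (0:ℝ)..Real.exp (u w - Finset.univ.sup' Finset.univ_nonempty u),
            ∏ w' ∈ Finset.univ.erase w, (1 - r * Real.exp (u w' - u w))) := by
  set ustar := Finset.univ.sup' Finset.univ_nonempty u with hustar
  set M := Real.exp (u w - ustar) with hM
  have hM0 : 0 < M := Real.exp_pos _
  have huw : u w ≤ ustar := Finset.le_sup' u (mem_univ w)
  have hM1 : M ≤ 1 := by
    rw [hM, ← Real.exp_zero]
    exact Real.exp_le_exp.2 (by linarith)
  have hsplit : Set.Ioo (0:ℝ) 1 = Set.Ioo 0 M ∪ Set.Ico M 1 :=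
    (Set.Ioo_union_Ico_eq_Ioo hM0 hM1).symm
  have hdisj : Disjoint (Set.Ioo (0:ℝ) M) (Set.Ico M 1) := by
    rw [Set.disjoint_left]
    rintro t ⟨-, h1⟩ ⟨h2, -⟩
    exact absurd h2 (not_le.2 h1)
  rw [hsplit, lintegral_union measurableSet_Ico hdisj]
  have hzero : ∫⁻ t in Set.Ico M 1,
      ∏ y ∈ Finset.univ.erase w, ENNReal.ofReal (1 - t * Real.exp (u y - u w)) = 0 := by
    rcases eq_or_lt_of_le huw with heq | hlt
    · have : Set.Ico M 1 = (∅ : Set ℝ) := by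
        rw [hM, heq]
        simp
      rw [this]
      simp
    · obtain ⟨ys, -, hys⟩ := Finset.exists_mem_eq_sup' Finset.univ_nonempty u
      have hysw : ys ≠ w := by
        intro h
        rw [h] at hys
        exact absurd (hustar ▸ hys) (by linarith)
      rw [setLIntegral_congr_fun measurableSet_Ico
        (fun t ht => ?_), lintegral_zero]
      refine Finset.prod_eq_zero (Finset.mem_erase.2 ⟨hysw, mem_univ ys⟩) ?_
      have h1 : (1:ℝ) ≤ t * Real.exp (u ys - u w) := by
        have : M * Real.exp (u ys - u w) = 1 := by
          rw [hM, ← Real.exp_add, ← hys, ← hustar]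
          ring_nf
          exact Real.exp_zero
        calc (1:ℝ) = M * Real.exp (u ys - u w) := this.symm
          _ ≤ t * Real.exp (u ys - u w) :=
            mul_le_mul_of_nonneg_right ht.1 (Real.exp_pos _).le
      exact ENNReal.ofReal_eq_zero.2 (by linarith)
  rw [hzero, add_zero]
  have hnn : ∀ t ∈ Set.Ioo (0:ℝ) M, ∀ y ∈ Finset.univ.erase w,
      0 ≤ 1 - t * Real.exp (u y - u w) := by
    intro t ht y _
    have h1 : t * Real.exp (u y - u w) < M * Real.exp (u y - u w) :=
      mul_lt_mul_of_pos_right ht.2 (Real.exp_pos _)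
    have h2 : M * Real.exp (u y - u w) ≤ 1 := by
      rw [hM, ← Real.exp_add]
      rw [← Real.exp_zero]
      exact Real.exp_le_exp.2 (by
        have := Finset.le_sup' u (mem_univ y)
        rw [← hustar] at this
        linarith)
    linarith
  rw [setLIntegral_congr_fun measurableSet_Ioo
    (fun t ht =>
      (ENNReal.ofReal_prod_of_nonneg (hnn t ht)).symm)]
  have hcont : Continuous (fun t : ℝ => ∏ y ∈ Finset.univ.erase w,
      (1 - t * Real.exp (u y - u w))) := by fun_prop
  have hint : IntegrableOn (fun t : ℝ => ∏ y ∈ Finset.univ.erase w,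
      (1 - t * Real.exp (u y - u w))) (Set.Ioo 0 M) volume :=
    (hcont.integrableOn_Icc (a := 0) (b := M)).mono_set Set.Ioo_subset_Icc_self
  rw [← ofReal_integral_eq_lintegral_ofReal hint
    ((ae_restrict_iff' measurableSet_Ioo).2 (Filter.Eventually.of_forall
      (fun t ht => Finset.prod_nonneg (hnn t ht))))]
  rw [intervalIntegral.integral_of_le hM0.le, integral_Ioc_eq_integral_Ioo]

private lemma pf_part2 {V : Type*} [Fintype V] [DecidableEq V] [Nonempty V]
    (u : V → ℝ) (w : V) :
    unifPi V {r : V → ℝ | ∀ y : V, y ≠ w →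
        u y - Real.log (r y) < u w - Real.log (r w)}
      = ∫⁻ t in Set.Ioo (0:ℝ) 1,
          ∏ y ∈ Finset.univ.erase w, ENNReal.ofReal (1 - t * Real.exp (u y - u w)) := by
  haveI := nu_prob
  set A : Set (ℝ × ({y : V // ¬ y = w} → ℝ)) :=
    {p | p.1 ∈ Set.Ioo (0:ℝ) 1} ∩
      ⋂ j : {y : V // ¬ y = w}, {p | p.2 j ∈ Set.Ioo (p.1 * Real.exp (u ↑j - u w)) 1}
    with hAdef
  have hA : MeasurableSet A := by
    refine (measurable_fst measurableSet_Ioo).inter (MeasurableSet.iInter fun j => ?_)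
    have hm : Measurable fun p : ℝ × ({y : V // ¬ y = w} → ℝ) => p.2 j := by fun_prop
    have h1 : MeasurableSet {p : ℝ × ({y : V // ¬ y = w} → ℝ) |
        p.1 * Real.exp (u ↑j - u w) < p.2 j} :=
      measurableSet_lt (by fun_prop) hm
    have h2 : MeasurableSet {p : ℝ × ({y : V // ¬ y = w} → ℝ) | p.2 j < 1} :=
      measurableSet_lt hm measurable_const
    exact h1.inter h2
  have hset : {r : V → ℝ | ∀ y : V, y ≠ w →
        u y - Real.log (r y) < u w - Real.log (r w)} ∩
        (Set.univ.pi fun _ : V => Set.Ioo (0:ℝ) 1)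
      = {r : V → ℝ | (r w, fun j : {y : V // ¬ y = w} => r j) ∈ A} := by
    ext r
    simp only [Set.mem_inter_iff, Set.mem_setOf_eq, Set.mem_pi, Set.mem_univ, forall_const,
      hAdef, Set.mem_iInter, Set.mem_Ioo]
    constructor
    · rintro ⟨hS, hbox⟩
      refine ⟨hbox w, fun j => ?_⟩
      have h1 := (pf_lt_iff (r ↑j) (r w) (u ↑j) (u w) ((hbox ↑j).1) ((hbox w).1)).1
        (hS ↑j j.2)
      exact ⟨h1, (hbox ↑j).2⟩
    · rintro ⟨hw, hj⟩
      have hbox : ∀ y : V, 0 < r y ∧ r y < 1 := by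
        intro y
        by_cases h : y = w
        · subst h; exact hw
        · have := hj ⟨y, h⟩
          refine ⟨lt_trans (mul_pos hw.1 (Real.exp_pos _)) this.1, this.2⟩
      refine ⟨fun y hy => ?_, hbox⟩
      exact (pf_lt_iff (r y) (r w) (u y) (u w) (hbox y).1 (hbox w).1).2 (hj ⟨y, hy⟩).1
  rw [pf_inter_box, hset, pf_split' w A hA]
  refine setLIntegral_congr_fun measurableSet_Ioo (fun t ht => ?_)
  have hslice : {x : {y : V // ¬ y = w} → ℝ | (t, x) ∈ A}
      = Set.univ.pi fun j : {y : V // ¬ y = w} =>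
          Set.Ioo (t * Real.exp (u ↑j - u w)) 1 := by
    ext x
    simp [hAdef, ht.1, ht.2, Set.mem_pi]
  rw [hslice, Measure.pi_pi]
  have hfac : ∀ j : {y : V // ¬ y = w},
      (volume.restrict (Set.Ioo (0:ℝ) 1)) (Set.Ioo (t * Real.exp (u ↑j - u w)) 1)
        = ENNReal.ofReal (1 - t * Real.exp (u ↑j - u w)) := by
    intro j
    rw [Measure.restrict_apply measurableSet_Ioo]
    have hsub : Set.Ioo (t * Real.exp (u ↑j - u w)) 1 ∩ Set.Ioo (0:ℝ) 1
        = Set.Ioo (t * Real.exp (u ↑j - u w)) 1 := by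
      exact Set.inter_eq_left.2 (Set.Ioo_subset_Ioo
        (le_of_lt (mul_pos ht.1 (Real.exp_pos _))) le_rfl)
    rw [hsub, Real.volume_Ioo]
  simp_rw [hfac]
  exact (Finset.prod_subtype (p := fun y => ¬ y = w) (Finset.univ.erase w)
    (fun y => by simp [Finset.mem_erase, Ne])
    (fun y => ENNReal.ofReal (1 - t * Real.exp (u y - u w)))).symm

private lemma pf_tie_null {V : Type*} [Fintype V] [DecidableEq V] (u : V → ℝ)
    {y y' : V} (h : ¬ y' = y) :
    unifPi V {r : V → ℝ | r y = r y' * Real.exp (u y - u y')} = 0 := by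
  haveI := nu_prob
  set c := Real.exp (u y - u y') with hc
  have hc0 : c ≠ 0 := (Real.exp_pos _).ne'
  set A : Set (ℝ × ({z : V // ¬ z = y} → ℝ)) := {p | p.1 = p.2 ⟨y', h⟩ * c} with hAdef
  have hA : MeasurableSet A := measurableSet_eq_fun measurable_fst (by fun_prop)
  have hpre : {r : V → ℝ | r y = r y' * c}
      = {r : V → ℝ | (r y, fun j : {z : V // ¬ z = y} => r ↑j) ∈ A} := rfl
  rw [hpre, pf_split' y A hA]
  have hz : ∀ t : ℝ,
      Measure.pi (fun _ : {z : V // ¬ z = y} => volume.restrict (Set.Ioo (0:ℝ) 1))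
        {x | (t, x) ∈ A} = 0 := by
    intro t
    have hsub : {x : {z : V // ¬ z = y} → ℝ | (t, x) ∈ A} ⊆
        Set.univ.pi fun j : {z : V // ¬ z = y} =>
          if j = ⟨y', h⟩ then ({t / c} : Set ℝ) else Set.univ := by
      intro x hx j _
      show x j ∈ if j = ⟨y', h⟩ then ({t / c} : Set ℝ) else Set.univ
      by_cases hj : j = ⟨y', h⟩
      · rw [if_pos hj]
        have : t = x ⟨y', h⟩ * c := hx
        rw [hj]
        exact Set.mem_singleton_iff.2 (by rw [eq_div_iff hc0]; exact this.symm)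
      · rw [if_neg hj]; trivial
    refine measure_mono_null hsub ?_
    rw [Measure.pi_pi]
    refine Finset.prod_eq_zero (Finset.mem_univ ⟨y', h⟩) ?_
    rw [if_pos rfl, Measure.restrict_apply (measurableSet_singleton _)]
    exact measure_mono_null Set.inter_subset_left (measure_singleton _)
  simp [hz]

private lemma pf_part1 {V : Type*} [Fintype V] [DecidableEq V] [Nonempty V] (u : V → ℝ) :
    unifPi V {r : V → ℝ | ∃! w : V, ∀ y : V, y ≠ w →
        u y - Real.log (r y) < u w - Real.log (r w)} = 1 := by
  haveI := nu_prob
  haveI : IsProbabilityMeasure (unifPi V) := by rw [unifPi]; infer_instance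
  set N := ⋃ (a : V) (b : V) (_ : ¬ b = a),
    {r : V → ℝ | r a = r b * Real.exp (u a - u b)} with hN
  have hNnull : unifPi V N = 0 :=
    measure_iUnion_null fun a => measure_iUnion_null fun b => measure_iUnion_null
      fun hab => pf_tie_null u hab
  have hsub : (Set.univ.pi fun _ : V => Set.Ioo (0:ℝ) 1) \ N ⊆
      {r : V → ℝ | ∃! w : V, ∀ y : V, y ≠ w →
        u y - Real.log (r y) < u w - Real.log (r w)} := by
    rintro r ⟨hbox, hnN⟩
    simp only [Set.mem_pi, Set.mem_univ, forall_const, Set.mem_Ioo] at hbox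
    have hdist : ∀ a b : V, a ≠ b →
        u a - Real.log (r a) ≠ u b - Real.log (r b) := by
      intro a b hab heq
      refine hnN ?_
      rw [hN]
      refine Set.mem_iUnion.2 ⟨a, Set.mem_iUnion.2 ⟨b, Set.mem_iUnion.2
        ⟨fun hba => hab hba.symm, ?_⟩⟩⟩
      exact (pf_eq_iff (r a) (r b) (u a) (u b) (hbox a).1 (hbox b).1).1 heq
    obtain ⟨w, -, hw⟩ := Finset.exists_max_image Finset.univ
      (fun z => u z - Real.log (r z)) Finset.univ_nonempty
    have hP : ∀ z : V, z ≠ w → u z - Real.log (r z) < u w - Real.log (r w) :=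
      fun z hz => lt_of_le_of_ne (hw z (Finset.mem_univ z)) (hdist z w hz)
    refine ⟨w, hP, fun w' hw' => ?_⟩
    by_contra hne
    exact lt_asymm (hw' w fun hh => hne hh.symm) (hP w' hne)
  refine le_antisymm prob_le_one ?_
  calc (1 : ENNReal) = unifPi V ((Set.univ.pi fun _ : V => Set.Ioo (0:ℝ) 1) \ N) := by
        rw [measure_diff_null hNnull, pf_box_one]
    _ ≤ _ := measure_mono hsub

/-- Report-noisy-max form of Permute-and-Flip: with `(r y)` i.i.d. uniform on `(0,1)`,
the perturbed argmax `ŷ = argmax_y (u y − log (r y))` is almost surely unique, and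
for every `w`, `P(ŷ = w) = ∫₀^{exp(u w − u*)} ∏_{w'≠w} (1 − r·exp(u w' − u w)) dr`
where `u* = max_y u y`. -/
theorem pf_report_noisy_max {V : Type*} [Fintype V] [DecidableEq V] [Nonempty V] (u : V → ℝ) :
    (unifPi V {r : V → ℝ | ∃! w : V, ∀ y : V, y ≠ w →
        u y - Real.log (r y) < u w - Real.log (r w)} = 1) ∧
    (∀ w : V,
      unifPi V {r : V → ℝ | ∀ y : V, y ≠ w →
          u y - Real.log (r y) < u w - Real.log (r w)}
        = ENNReal.ofReal
            (∫ r in (0:ℝ)..Real.exp (u w - Finset.univ.sup' Finset.univ_nonempty u),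
              ∏ w' ∈ Finset.univ.erase w, (1 - r * Real.exp (u w' - u w)))) :=
  ⟨pf_part1 u, fun w => by rw [pf_part2 u w, pf_integral u w]⟩
end

section
/- The Permute-and-Flip decoder with temperature T > 0 is (2/T)-stable: for any nonempty finite vocabulary V, any δ ≥ 0, any logits u, ũ : V → ℝ with ‖ũ − u‖_∞ ≤ δ, and every y ∈ V, one has |log( PF_T(ũ)(y) / PF_T(u)(y) )| ≤ (2/T)·δ. -/
open Finset MeasureTheory

/-- The Permute-and-Flip distribution with temperature `T` for logits `u`:
`PF_T(u)(y) = ∫₀^{exp((u y − u*)/T)} ∏_{y'≠y} (1 − r·exp((u y' − u y)/T)) dr`,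
where `u* = max_y u y`. -/
noncomputable def PF {V : Type*} [Fintype V] [DecidableEq V] [Nonempty V]
    (T : ℝ) (u : V → ℝ) (y : V) : ℝ :=
  ∫ r in (0:ℝ)..Real.exp ((u y - Finset.univ.sup' Finset.univ_nonempty u) / T),
    ∏ z ∈ Finset.univ.erase y, (1 - r * Real.exp ((u z - u y) / T))

section Aux

variable {V : Type*} [Fintype V] [DecidableEq V] [Nonempty V]

private lemma pf_cont (c : V → ℝ) (y : V) :
    Continuous fun r : ℝ => ∏ z ∈ Finset.univ.erase y, (1 - r * Real.exp (c z)) := by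
  apply continuous_finset_prod
  intro z _
  fun_prop

private lemma pf_integrable (c : V → ℝ) (y : V) (a b : ℝ) :
    IntervalIntegrable (fun r : ℝ => ∏ z ∈ Finset.univ.erase y, (1 - r * Real.exp (c z)))
      volume a b :=
  (pf_cont c y).intervalIntegrable a b

/-- Positivity of `PF`. -/
lemma PF_pos (T : ℝ) (hT : 0 < T) (u : V → ℝ) (y : V) : 0 < PF T u y := by
  unfold PF
  set M := Finset.univ.sup' Finset.univ_nonempty u with hM
  have hle : ∀ z : V, u z ≤ M := fun z => Finset.le_sup' u (Finset.mem_univ z)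
  refine intervalIntegral.intervalIntegral_pos_of_pos_on
    (pf_integrable (fun z => (u z - u y) / T) y _ _) ?_ (Real.exp_pos _)
  intro r hr
  apply Finset.prod_pos
  intro z _
  have h1 : r * Real.exp ((u z - u y) / T) <
      Real.exp ((u y - M) / T) * Real.exp ((u z - u y) / T) := by
    exact mul_lt_mul_of_pos_right hr.2 (Real.exp_pos _)
  have h2 : Real.exp ((u y - M) / T) * Real.exp ((u z - u y) / T) ≤ 1 := by
    rw [← Real.exp_add]
    have : (u y - M) / T + (u z - u y) / T = (u z - M) / T := by ring
    rw [this]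
    exact Real.exp_le_one_iff.mpr (div_nonpos_of_nonpos_of_nonneg (by linarith [hle z]) hT.le)
  linarith

/-- One-sided bound. -/
lemma PF_le (T δ : ℝ) (hT : 0 < T) (hδ : 0 ≤ δ) (u v : V → ℝ)
    (h : ∀ z : V, |v z - u z| ≤ δ) (y : V) :
    PF T v y ≤ Real.exp (2 * δ / T) * PF T u y := by
  have hP : ∀ z : V, u z - δ ≤ v z ∧ v z ≤ u z + δ := by
    intro z
    have := abs_le.mp (h z)
    constructor <;> linarith [this.1, this.2]
  set Mu := Finset.univ.sup' Finset.univ_nonempty u with hMu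
  set Mv := Finset.univ.sup' Finset.univ_nonempty v with hMv
  have hleu : ∀ z : V, u z ≤ Mu := fun z => Finset.le_sup' u (Finset.mem_univ z)
  have hlev : ∀ z : V, v z ≤ Mv := fun z => Finset.le_sup' v (Finset.mem_univ z)
  have hMuMv : Mu - δ ≤ Mv := by
    obtain ⟨z, _, hz⟩ := Finset.exists_mem_eq_sup' Finset.univ_nonempty u
    have hMuz : Mu = u z := hz
    linarith [(hP z).1, hlev z]
  set c := Real.exp (2 * δ / T) with hc
  have hc0 : (0:ℝ) < c := Real.exp_pos _
  set B := Real.exp ((v y - Mv - 2 * δ) / T) with hB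
  set A := Real.exp ((u y - Mu) / T) with hA
  have hBA : B ≤ A := by
    apply Real.exp_le_exp.mpr
    exact (div_le_div_iff_of_pos_right hT).mpr (by linarith [(hP y).2, hMuMv])
  -- step 1 : substitution r = c * s
  have hsub : PF T v y
      = c * ∫ s in (0:ℝ)..B, ∏ z ∈ Finset.univ.erase y,
          (1 - s * Real.exp ((v z - v y + 2 * δ) / T)) := by
    unfold PF
    rw [← hMv]
    have key : (fun s : ℝ => ∏ z ∈ Finset.univ.erase y,
        (1 - s * Real.exp ((v z - v y + 2 * δ) / T)))
        = fun s : ℝ => ∏ z ∈ Finset.univ.erase y,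
          (1 - (c * s) * Real.exp ((v z - v y) / T)) := by
      funext s
      apply Finset.prod_congr rfl
      intro z _
      rw [hc, mul_comm c s, mul_assoc, ← Real.exp_add]
      congr 2
      field_simp
      ring
    have hcB : c * B = Real.exp ((v y - Mv) / T) := by
      rw [hc, hB, ← Real.exp_add]
      congr 1
      field_simp
      ring
    have h0 := intervalIntegral.integral_comp_mul_left
      (fun r : ℝ => ∏ z ∈ Finset.univ.erase y, (1 - r * Real.exp ((v z - v y) / T)))
      hc0.ne' (a := 0) (b := B)
    simp only [mul_zero] at h0
    rw [hcB] at h0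
    rw [key, h0, smul_eq_mul, ← mul_assoc, mul_inv_cancel₀ hc0.ne', one_mul]
  -- step 2 : pointwise comparison of integrands on [0, B]
  have hmono : (∫ s in (0:ℝ)..B, ∏ z ∈ Finset.univ.erase y,
        (1 - s * Real.exp ((v z - v y + 2 * δ) / T)))
      ≤ ∫ s in (0:ℝ)..B, ∏ z ∈ Finset.univ.erase y,
        (1 - s * Real.exp ((u z - u y) / T)) := by
    apply intervalIntegral.integral_mono_on (Real.exp_pos _).le
      (pf_integrable (fun z => (v z - v y + 2 * δ) / T) y 0 B)
      (pf_integrable (fun z => (u z - u y) / T) y 0 B)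
    intro s hs
    apply Finset.prod_le_prod
    · intro z _
      have h1 : s * Real.exp ((v z - v y + 2 * δ) / T)
          ≤ B * Real.exp ((v z - v y + 2 * δ) / T) :=
        mul_le_mul_of_nonneg_right hs.2 (Real.exp_pos _).le
      have h2 : B * Real.exp ((v z - v y + 2 * δ) / T) ≤ 1 := by
        rw [hB, ← Real.exp_add]
        apply Real.exp_le_one_iff.mpr
        have : (v y - Mv - 2 * δ) / T + (v z - v y + 2 * δ) / T = (v z - Mv) / T := by ring
        rw [this]
        exact div_nonpos_of_nonpos_of_nonneg (by linarith [hlev z]) hT.le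
      linarith
    · intro z _
      have hexp : Real.exp ((u z - u y) / T) ≤ Real.exp ((v z - v y + 2 * δ) / T) := by
        apply Real.exp_le_exp.mpr
        exact (div_le_div_iff_of_pos_right hT).mpr (by linarith [(hP z).1, (hP y).2])
      nlinarith [hs.1, Real.exp_pos ((u z - u y) / T)]
  -- step 3 : extend the integration interval from B to A
  have hext : (∫ s in (0:ℝ)..B, ∏ z ∈ Finset.univ.erase y,
        (1 - s * Real.exp ((u z - u y) / T))) ≤ PF T u y := by
    unfold PF
    rw [← hMu, ← hA]
    rw [← intervalIntegral.integral_add_adjacent_intervals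
      (pf_integrable (fun z => (u z - u y) / T) y 0 B)
      (pf_integrable (fun z => (u z - u y) / T) y B A)]
    have : (0:ℝ) ≤ ∫ s in B..A, ∏ z ∈ Finset.univ.erase y,
        (1 - s * Real.exp ((u z - u y) / T)) := by
      apply intervalIntegral.integral_nonneg hBA
      intro s hs
      apply Finset.prod_nonneg
      intro z _
      have h1 : s * Real.exp ((u z - u y) / T) ≤ A * Real.exp ((u z - u y) / T) :=
        mul_le_mul_of_nonneg_right hs.2 (Real.exp_pos _).le
      have h2 : A * Real.exp ((u z - u y) / T) ≤ 1 := by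
        rw [hA, ← Real.exp_add]
        apply Real.exp_le_one_iff.mpr
        have : (u y - Mu) / T + (u z - u y) / T = (u z - Mu) / T := by ring
        rw [this]
        exact div_nonpos_of_nonpos_of_nonneg (by linarith [hleu z]) hT.le
      linarith
    linarith
  calc PF T v y = c * _ := hsub
  _ ≤ c * _ := mul_le_mul_of_nonneg_left hmono hc0.le
  _ ≤ c * PF T u y := mul_le_mul_of_nonneg_left hext hc0.le

end Aux

/-- The Permute-and-Flip decoder with temperature `T` is `(2/T)`-stable. -/
theorem pf_stability {V : Type*} [Fintype V] [DecidableEq V] [Nonempty V]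
    (T δ : ℝ) (hT : 0 < T) (hδ : 0 ≤ δ)
    (u v : V → ℝ) (h : ∀ y : V, |v y - u y| ≤ δ) (y : V) :
    |Real.log (PF T v y / PF T u y)| ≤ (2 / T) * δ := by
  have h' : ∀ z : V, |u z - v z| ≤ δ := fun z => by rw [abs_sub_comm]; exact h z
  have hu := PF_pos T hT u y
  have hv := PF_pos T hT v y
  have h1 := PF_le T δ hT hδ u v h y
  have h2 := PF_le T δ hT hδ v u h' y
  rw [Real.log_div hv.ne' hu.ne', abs_le]
  have e1 : Real.log (PF T v y) ≤ 2 * δ / T + Real.log (PF T u y) := by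
    calc Real.log (PF T v y) ≤ Real.log (Real.exp (2 * δ / T) * PF T u y) :=
      Real.log_le_log hv h1
    _ = 2 * δ / T + Real.log (PF T u y) := by
      rw [Real.log_mul (Real.exp_pos _).ne' hu.ne', Real.log_exp]
  have e2 : Real.log (PF T u y) ≤ 2 * δ / T + Real.log (PF T v y) := by
    calc Real.log (PF T u y) ≤ Real.log (Real.exp (2 * δ / T) * PF T v y) :=
      Real.log_le_log hu h2
    _ = 2 * δ / T + Real.log (PF T v y) := by
      rw [Real.log_mul (Real.exp_pos _).ne' hv.ne', Real.log_exp]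
  constructor
  · have : (2 / T) * δ = 2 * δ / T := by ring
    rw [this]; linarith
  · have : (2 / T) * δ = 2 * δ / T := by ring
    rw [this]; linarith
end

section
/- Permute-and-Flip is nearly greedy: for any nonempty finite vocabulary V, any logits u : V → ℝ with u* = max_{y∈V} u(y), and any temperature T > 0, the expected utility of a PF sample satisfies E_{y∼PF_T(u)}[ u(y) ] ≥ u* − T·log|V|. -/
open Finset MeasureTheory

/-- Key summation identity: the "densities" integrate to `1 - ∏ (1 - a z)`. -/
lemma pf_sum_aux {V : Type*} [Fintype V] [DecidableEq V] (a : V → ℝ) :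
    ∑ z : V, a z * ∫ t in (0:ℝ)..1, ∏ w ∈ Finset.univ.erase z, (1 - t * a w)
      = 1 - ∏ z : V, (1 - a z) := by
  have hcont : ∀ z : V, Continuous fun t : ℝ => a z * ∏ w ∈ Finset.univ.erase z, (1 - t * a w) := by
    intro z; fun_prop
  have h1 : ∀ z : V, a z * ∫ t in (0:ℝ)..1, ∏ w ∈ Finset.univ.erase z, (1 - t * a w)
      = ∫ t in (0:ℝ)..1, a z * ∏ w ∈ Finset.univ.erase z, (1 - t * a w) := by
    intro z
    rw [intervalIntegral.integral_const_mul]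
  simp_rw [h1]
  rw [← intervalIntegral.integral_finset_sum (fun z _ => ((hcont z).intervalIntegrable 0 1))]
  have key : ∀ t ∈ Set.uIcc (0:ℝ) 1,
      HasDerivAt (fun t : ℝ => -∏ z : V, (1 - t * a z))
        (∑ z : V, a z * ∏ w ∈ Finset.univ.erase z, (1 - t * a w)) t := by
    intro t _
    have hd : ∀ z ∈ Finset.univ (α := V), HasDerivAt (fun t : ℝ => 1 - t * a z) (-(a z)) t := by
      intro z _
      simpa using ((hasDerivAt_id t).mul_const (a z)).const_sub 1
    have : HasDerivAt (fun t : ℝ => -∏ z : V, (1 - t * a z)) _ t := (HasDerivAt.fun_finsetProd hd).neg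
    convert this using 1
    simp [smul_eq_mul]
    ring_nf
    exact Finset.sum_congr rfl fun z _ => by ring
  rw [intervalIntegral.integral_eq_sub_of_hasDerivAt key
    ((by fun_prop : Continuous fun t : ℝ =>
      ∑ z : V, a z * ∏ w ∈ Finset.univ.erase z, (1 - t * a w)).intervalIntegrable 0 1)]
  simp
  ring

/-- Substitution: `PF T u y = a y * ∫₀¹ ∏_{z≠y} (1 - t * a z)` with `a z = exp((u z - u*)/T)`. -/
lemma PF_eq {V : Type*} [Fintype V] [DecidableEq V] [Nonempty V]
    (u : V → ℝ) (T : ℝ) (y : V) :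
    PF T u y = Real.exp ((u y - Finset.univ.sup' Finset.univ_nonempty u) / T) *
      ∫ t in (0:ℝ)..1, ∏ z ∈ Finset.univ.erase y,
        (1 - t * Real.exp ((u z - Finset.univ.sup' Finset.univ_nonempty u) / T)) := by
  set M := Finset.univ.sup' Finset.univ_nonempty u with hM
  set a : V → ℝ := fun z => Real.exp ((u z - M) / T) with ha
  have hay : a y ≠ 0 := (Real.exp_pos _).ne'
  have hexp : ∀ z : V, Real.exp ((u z - u y) / T) = a z / a y := by
    intro z
    rw [ha]
    rw [← Real.exp_sub]
    rw [div_sub_div_same]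
    ring_nf
  rw [PF]
  simp_rw [hexp]
  rw [show Real.exp ((u y - M)/T) = a y from rfl]
  have := intervalIntegral.smul_integral_comp_mul_left
    (f := fun r => ∏ z ∈ Finset.univ.erase y, (1 - r * (a z / a y))) (a := (0:ℝ)) (b := 1) (a y)
  rw [mul_zero, mul_one] at this
  rw [← this, smul_eq_mul]
  congr 1
  apply intervalIntegral.integral_congr
  intro t _
  apply Finset.prod_congr rfl
  intro z _
  rw [mul_comm (a y) t, mul_assoc, mul_div_cancel₀ _ hay]

/-- Permute-and-Flip is nearly greedy:
`E_{y∼PF_T(u)}[u y] ≥ u* − T·log |V|` where `u* = max_y u y`. -/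
theorem pf_nearly_greedy {V : Type*} [Fintype V] [DecidableEq V] [Nonempty V]
    (u : V → ℝ) (T : ℝ) (hT : 0 < T) :
    ∑ y : V, PF T u y * u y
      ≥ Finset.univ.sup' Finset.univ_nonempty u - T * Real.log (Fintype.card V) := by
  set M := Finset.univ.sup' Finset.univ_nonempty u with hM
  set a : V → ℝ := fun z => Real.exp ((u z - M) / T) with ha
  set I : V → ℝ := fun y => ∫ t in (0:ℝ)..1, ∏ z ∈ Finset.univ.erase y, (1 - t * a z) with hI
  have hle : ∀ z : V, u z ≤ M := fun z => Finset.le_sup' u (Finset.mem_univ z)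
  have hapos : ∀ z : V, 0 < a z := fun z => Real.exp_pos _
  have ha1 : ∀ z : V, a z ≤ 1 := by
    intro z
    rw [ha]
    apply Real.exp_le_one_iff.mpr
    exact div_nonpos_of_nonpos_of_nonneg (sub_nonpos.2 (hle z)) hT.le
  have hfac : ∀ t ∈ Set.Icc (0:ℝ) 1, ∀ z : V, 0 ≤ 1 - t * a z := by
    intro t ht z
    have : t * a z ≤ 1 := mul_le_one₀ ht.2 (hapos z).le (ha1 z)
    linarith
  have hfac1 : ∀ t ∈ Set.Icc (0:ℝ) 1, ∀ z : V, 1 - t * a z ≤ 1 := by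
    intro t ht z
    nlinarith [(hapos z).le, ht.1]
  have hI0 : ∀ y : V, 0 ≤ I y := by
    intro y
    apply intervalIntegral.integral_nonneg zero_le_one
    intro t ht
    exact Finset.prod_nonneg fun z _ => hfac t ht z
  have hI1 : ∀ y : V, I y ≤ 1 := by
    intro y
    have h2 : I y ≤ ∫ _ in (0:ℝ)..1, (1:ℝ) := by
      apply intervalIntegral.integral_mono_on zero_le_one
      · exact (by fun_prop :
          Continuous fun t : ℝ => ∏ z ∈ Finset.univ.erase y, (1 - t * a z)).intervalIntegrable 0 1
      · exact intervalIntegrable_const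
      · intro t ht
        exact Finset.prod_le_one (fun z _ => hfac t ht z) (fun z _ => hfac1 t ht z)
    simpa using h2
  have hPF : ∀ y : V, PF T u y = a y * I y := fun y => PF_eq u T y
  have hPF0 : ∀ y : V, 0 ≤ PF T u y := by
    intro y; rw [hPF y]; exact mul_nonneg (hapos y).le (hI0 y)
  -- the PF probabilities sum to 1
  have hprod0 : ∏ z : V, (1 - a z) = 0 := by
    obtain ⟨y₀, -, hy₀⟩ := Finset.exists_mem_eq_sup' Finset.univ_nonempty u
    apply Finset.prod_eq_zero (Finset.mem_univ y₀)
    have hz : u y₀ - M = 0 := by rw [hM, ← hy₀]; ring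
    have : a y₀ = 1 := by rw [ha]; simp [hz]
    rw [this]; ring
  have hsum : ∑ y : V, PF T u y = 1 := by
    simp_rw [hPF]
    rw [pf_sum_aux a, hprod0]
    ring
  -- `PF y / a y = I y ≤ 1`
  have hratio : ∀ y : V, PF T u y * (a y)⁻¹ = I y := by
    intro y
    rw [hPF y, mul_comm (a y), mul_assoc, mul_inv_cancel₀ (hapos y).ne', mul_one]
  have hsumratio : ∑ y : V, PF T u y * (a y)⁻¹ ≤ (Fintype.card V : ℝ) := by
    calc ∑ y : V, PF T u y * (a y)⁻¹ ≤ ∑ _y : V, (1:ℝ) := by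
          apply Finset.sum_le_sum
          intro y _
          rw [hratio y]
          exact hI1 y
      _ = (Fintype.card V : ℝ) := by simp
  have hsumratio1 : (1:ℝ) ≤ ∑ y : V, PF T u y * (a y)⁻¹ := by
    rw [← hsum]
    apply Finset.sum_le_sum
    intro y _
    nlinarith [hPF0 y, hapos y, ha1 y, one_le_inv_iff₀.mpr ⟨hapos y, ha1 y⟩]
  -- Jensen's inequality for log
  have hjen : ∑ y : V, PF T u y * Real.log (a y)⁻¹
      ≤ Real.log (∑ y : V, PF T u y * (a y)⁻¹) := by
    have := strictConcaveOn_log_Ioi.concaveOn.le_map_sum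
      (t := Finset.univ) (w := fun y : V => PF T u y) (p := fun y : V => (a y)⁻¹)
      (fun y _ => hPF0 y) hsum (fun y _ => Set.mem_Ioi.mpr (inv_pos.2 (hapos y)))
    simpa [smul_eq_mul] using this
  have hlog : Real.log (∑ y : V, PF T u y * (a y)⁻¹) ≤ Real.log (Fintype.card V) :=
    Real.log_le_log (by linarith) hsumratio
  have hmain : ∑ y : V, PF T u y * Real.log (a y)⁻¹ ≤ Real.log (Fintype.card V) :=
    le_trans hjen hlog
  -- rewrite utilities
  have hu : ∀ y : V, u y = M - T * Real.log (a y)⁻¹ := by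
    intro y
    rw [ha]
    simp only [Real.log_inv, Real.log_exp]
    field_simp
    ring
  calc ∑ y : V, PF T u y * u y
      = ∑ y : V, (PF T u y * M - T * (PF T u y * Real.log (a y)⁻¹)) := by
        apply Finset.sum_congr rfl
        intro y _
        rw [hu y]; ring
    _ = M - T * ∑ y : V, PF T u y * Real.log (a y)⁻¹ := by
        rw [Finset.sum_sub_distrib, ← Finset.sum_mul, hsum, one_mul, ← Finset.mul_sum]
    _ ≥ M - T * Real.log (Fintype.card V) := by
        have := mul_le_mul_of_nonneg_left hmain hT.le
        linarith
end

section
/- Permute-and-Flip is never worse than softmax: for any nonempty finite vocabulary V, any logits u : V → ℝ, and any temperature T > 0, E_{y∼PF_T(u)}[ u(y) ] ≥ E_{y∼Softmax_T(u)}[ u(y) ]. -/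
open Finset MeasureTheory

section Aux
variable {V : Type*} [Fintype V] [DecidableEq V] [Nonempty V] (u : V → ℝ) (T : ℝ)

noncomputable def qq (y : V) : ℝ :=
  Real.exp ((u y - Finset.univ.sup' Finset.univ_nonempty u) / T)

noncomputable def II (y : V) : ℝ :=
  ∫ t in (0:ℝ)..1, ∏ z ∈ Finset.univ.erase y, (1 - t * qq u T z)

variable {u T}

lemma qq_pos (y : V) : 0 < qq u T y := Real.exp_pos _

lemma qq_le_one (hT : 0 < T) (y : V) : qq u T y ≤ 1 := by
  rw [qq, Real.exp_le_one_iff]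
  exact div_nonpos_of_nonpos_of_nonneg
    (sub_nonpos.2 (Finset.le_sup' u (mem_univ y))) hT.le

lemma cont_prod (s : Finset V) : Continuous fun t : ℝ => ∏ z ∈ s, (1 - t * qq u T z) :=
  continuous_finset_prod s fun i _ => by continuity

-- Step A
lemma PF_eq_s6 (y : V) : PF T u y = qq u T y * II u T y := by
  have hq := qq_pos (u := u) (T := T) y
  have hexp : ∀ z : V, Real.exp ((u z - u y) / T) = qq u T z / qq u T y := by
    intro z
    rw [qq, qq, ← Real.exp_sub]
    congr 1
    ring
  have h1 : PF T u y = ∫ r in (0:ℝ)..qq u T y,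
      ∏ z ∈ Finset.univ.erase y, (1 - (r / qq u T y) * qq u T z) := by
    rw [PF]
    congr 1
    funext r
    refine Finset.prod_congr rfl fun z _ => ?_
    rw [hexp z]
    ring
  calc PF T u y = ∫ r in (0:ℝ)..qq u T y,
        ∏ z ∈ Finset.univ.erase y, (1 - (r / qq u T y) * qq u T z) := h1
    _ = qq u T y • ∫ t in (0:ℝ)/qq u T y..qq u T y/qq u T y,
        ∏ z ∈ Finset.univ.erase y, (1 - t * qq u T z) :=
      intervalIntegral.integral_comp_div
        (f := fun t => ∏ z ∈ Finset.univ.erase y, (1 - t * qq u T z)) hq.ne'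
    _ = qq u T y * II u T y := by
      rw [zero_div, div_self hq.ne', II, smul_eq_mul]

-- Step B
lemma sum_qq_II (hT : 0 < T) : ∑ y : V, qq u T y * II u T y = 1 := by
  obtain ⟨y0, -, hy0⟩ := Finset.exists_mem_eq_sup' (Finset.univ_nonempty (α := V)) u
  have hq0 : qq u T y0 = 1 := by
    rw [qq, ← hy0, sub_self, zero_div, Real.exp_zero]
  have hderiv : ∀ t ∈ Set.uIcc (0:ℝ) 1,
      HasDerivAt (fun t : ℝ => ∏ z : V, (1 - t * qq u T z))
        (∑ y : V, (∏ z ∈ Finset.univ.erase y, (1 - t * qq u T z)) • (-(qq u T y))) t := by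
    intro t _
    have := HasDerivAt.fun_finsetProd (u := Finset.univ)
      (f := fun (z : V) (t : ℝ) => 1 - t * qq u T z) (f' := fun z => -(qq u T z))
      (x := t) (fun i _ => by simpa using ((hasDerivAt_id t).mul_const (qq u T i)).const_sub 1)
    simpa using this
  have hcont : Continuous fun t : ℝ =>
      ∑ y : V, (∏ z ∈ Finset.univ.erase y, (1 - t * qq u T z)) • (-(qq u T y)) :=
    continuous_finset_sum _ fun i _ => (cont_prod _).smul continuous_const
  have hint := intervalIntegral.integral_eq_sub_of_hasDerivAt hderiv
    (hcont.intervalIntegrable 0 1)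
  have hP1 : (∏ z : V, (1 - (1:ℝ) * qq u T z)) = 0 :=
    Finset.prod_eq_zero (mem_univ y0) (by rw [hq0]; ring)
  have hP0 : (∏ z : V, (1 - (0:ℝ) * qq u T z)) = 1 := by simp
  rw [hP1, hP0] at hint
  have heq : ∀ y : V, qq u T y * II u T y
      = -∫ t in (0:ℝ)..1, (∏ z ∈ Finset.univ.erase y, (1 - t * qq u T z)) • (-(qq u T y)) := by
    intro y
    rw [II, ← intervalIntegral.integral_neg, ← intervalIntegral.integral_const_mul]
    congr 1
    funext t
    simp [mul_comm]
  rw [Finset.sum_congr rfl fun y _ => heq y, Finset.sum_neg_distrib,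
    ← intervalIntegral.integral_finset_sum
      (f := fun y (t : ℝ) => (∏ z ∈ Finset.univ.erase y, (1 - t * qq u T z)) • (-(qq u T y)))
      (fun y _ => (((cont_prod _).smul continuous_const).intervalIntegrable 0 1)), hint]
  ring

-- Step C
lemma II_mono (hT : 0 < T) {y y' : V} (h : u y' ≤ u y) : II u T y' ≤ II u T y := by
  rcases eq_or_ne y y' with rfl | hne
  · exact le_rfl
  have hq : qq u T y' ≤ qq u T y := by
    rw [qq, qq, Real.exp_le_exp]
    have : u y' - Finset.univ.sup' Finset.univ_nonempty u
        ≤ u y - Finset.univ.sup' Finset.univ_nonempty u := by linarith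
    exact (div_le_div_iff_of_pos_right hT).2 this
  refine intervalIntegral.integral_mono_on zero_le_one
    ((cont_prod _).intervalIntegrable 0 1) ((cont_prod _).intervalIntegrable 0 1) ?_
  intro t ht
  obtain ⟨ht0, ht1⟩ := ht
  have hfac : ∀ z : V, 0 ≤ 1 - t * qq u T z := by
    intro z
    have h1 : t * qq u T z ≤ 1 * 1 :=
      mul_le_mul ht1 (qq_le_one hT z) (qq_pos z).le zero_le_one
    linarith
  have hy : y ∈ Finset.univ.erase y' := Finset.mem_erase.2 ⟨hne, mem_univ y⟩
  have hy' : y' ∈ Finset.univ.erase y := Finset.mem_erase.2 ⟨(Ne.symm hne), mem_univ y'⟩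
  rw [← Finset.mul_prod_erase _ _ hy, ← Finset.mul_prod_erase _ _ hy',
    Finset.erase_right_comm]
  have hprod : 0 ≤ ∏ z ∈ (Finset.univ.erase y).erase y', (1 - t * qq u T z) :=
    Finset.prod_nonneg fun z _ => hfac z
  have : t * qq u T y' ≤ t * qq u T y := mul_le_mul_of_nonneg_left hq ht0
  exact mul_le_mul_of_nonneg_right (by linarith) hprod

-- Step D
lemma softmax_eq (hT : 0 < T) (y : V) :
    softmax T u y = qq u T y / ∑ z : V, qq u T z := by
  have hM : ∀ z : V, qq u T z
      = Real.exp (u z / T) / Real.exp (Finset.univ.sup' Finset.univ_nonempty u / T) := by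
    intro z
    rw [qq, sub_div, Real.exp_sub]
  have he : Real.exp (Finset.univ.sup' Finset.univ_nonempty u / T) ≠ 0 := (Real.exp_pos _).ne'
  have hs : (∑ z : V, Real.exp (u z / T)) ≠ 0 :=
    (Finset.sum_pos (fun z _ => Real.exp_pos _) Finset.univ_nonempty).ne'
  simp_rw [softmax, hM, ← Finset.sum_div]
  rw [div_div_div_cancel_right₀]
  exact he

lemma weighted_cheb {V : Type*} [Fintype V] (w a b : V → ℝ)
    (hw : ∀ y, 0 ≤ w y) (hS : 0 < ∑ y, w y)
    (hmono : ∀ y y', 0 ≤ (a y - a y') * (b y - b y'))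
    (hza : ∑ y, w y * a y = 0) :
    0 ≤ ∑ y, w y * (a y * b y) := by
  have expand : ∀ y y' : V, w y * w y' * ((a y - a y') * (b y - b y'))
      = w y * (a y * b y) * w y' + w y * (w y' * (a y' * b y'))
        - (w y * a y) * (w y' * b y') - (w y * b y) * (w y' * a y') := by
    intros; ring
  have h1 : 0 ≤ ∑ y : V, ∑ y' : V, w y * w y' * ((a y - a y') * (b y - b y')) :=
    Finset.sum_nonneg fun y _ => Finset.sum_nonneg fun y' _ =>
      mul_nonneg (mul_nonneg (hw y) (hw y')) (hmono y y')
  have h2 : ∑ y : V, ∑ y' : V, w y * w y' * ((a y - a y') * (b y - b y'))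
      = 2 * ((∑ y, w y) * (∑ y, w y * (a y * b y)))
        - 2 * ((∑ y, w y * a y) * (∑ y, w y * b y)) := by
    simp only [expand, Finset.sum_sub_distrib, Finset.sum_add_distrib, ← Finset.mul_sum,
      ← Finset.sum_mul, ← Finset.mul_sum]
    ring
  rw [h2, hza] at h1
  nlinarith

end Aux

/-- Permute-and-Flip is never worse than softmax:
`E_{y∼PF_T(u)}[u y] ≥ E_{y∼Softmax_T(u)}[u y]`. -/
theorem pf_never_worse_than_softmax {V : Type*} [Fintype V] [DecidableEq V] [Nonempty V]
    (u : V → ℝ) (T : ℝ) (hT : 0 < T) :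
    ∑ y : V, PF T u y * u y ≥ ∑ y : V, softmax T u y * u y := by
  set S := ∑ z : V, qq u T z with hS
  have hSpos : 0 < S := Finset.sum_pos (fun z _ => qq_pos z) Finset.univ_nonempty
  have hmono : ∀ y y' : V,
      0 ≤ ((II u T y - 1/S) - (II u T y' - 1/S)) * (u y - u y') := by
    intro y y'
    have : (II u T y - 1/S) - (II u T y' - 1/S) = II u T y - II u T y' := by ring
    rw [this]
    rcases le_total (u y') (u y) with h | h
    · exact mul_nonneg (sub_nonneg.2 (II_mono hT h)) (sub_nonneg.2 h)
    · have h1 := sub_nonpos.2 (II_mono hT h)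
      have h2 := sub_nonpos.2 h
      nlinarith
  have hzero : ∑ y : V, qq u T y * (II u T y - 1/S) = 0 := by
    have : ∑ y : V, qq u T y * (II u T y - 1/S)
        = (∑ y : V, qq u T y * II u T y) - (∑ y : V, qq u T y) * (1/S) := by
      rw [Finset.sum_mul, ← Finset.sum_sub_distrib]
      exact Finset.sum_congr rfl fun y _ => by ring
    rw [this, sum_qq_II hT, ← hS]
    field_simp
    ring
  have key := weighted_cheb (qq u T) (fun y => II u T y - 1/S) u
    (fun y => (qq_pos y).le) hSpos hmono hzero
  have hdiff : ∑ y : V, PF T u y * u y - ∑ y : V, softmax T u y * u y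
      = ∑ y : V, qq u T y * ((II u T y - 1/S) * u y) := by
    rw [← Finset.sum_sub_distrib]
    refine Finset.sum_congr rfl fun y _ => ?_
    rw [PF_eq_s6, softmax_eq hT, ← hS]
    field_simp
  linarith [hdiff ▸ key]
end

section
/- Two-token comparison: let V = {a, b}, Δ > 0, T > 0, and logits u(a) = Δ, u(b) = 0. Then the Permute-and-Flip distribution at temperature T selects the suboptimal token b with probability PF_T(u)(b) = (1/2)·exp(−Δ/T) and selects a with probability 1 − (1/2)·exp(−Δ/T), while Softmax_T(u)(b) = 1/(1 + exp(Δ/T)); moreover (1/2)·exp(−Δ/T) < 1/(1 + exp(Δ/T)). -/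
open Finset MeasureTheory

open intervalIntegral in
lemma pf_integ_aux (E c : ℝ) : ∫ r in (0:ℝ)..E, (1 - r * c) = E - c * E^2 / 2 := by
  rw [integral_sub intervalIntegrable_const
      (show IntervalIntegrable (fun r : ℝ => r * c) volume 0 E from
        (continuous_id'.mul continuous_const).intervalIntegrable 0 E),
      intervalIntegral.integral_mul_const, integral_id]
  simp; ring

/-- Two-token comparison: for `V = {a, b}` with logits `u a = Δ > 0`, `u b = 0`,
PF selects the suboptimal token `b` with probability `(1/2)·exp(−Δ/T)` and `a` with
probability `1 − (1/2)·exp(−Δ/T)`, softmax selects `b` with probability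
`1/(1 + exp(Δ/T))`, and the PF probability of `b` is strictly smaller. -/
theorem pf_two_token {V : Type*} [Fintype V] [DecidableEq V] [Nonempty V]
    (a b : V) (hab : a ≠ b) (huniv : (Finset.univ : Finset V) = {a, b})
    (Δ T : ℝ) (hΔ : 0 < Δ) (hT : 0 < T)
    (u : V → ℝ) (hua : u a = Δ) (hub : u b = 0) :
    PF T u b = (1 / 2) * Real.exp (-Δ / T) ∧
    PF T u a = 1 - (1 / 2) * Real.exp (-Δ / T) ∧
    softmax T u b = 1 / (1 + Real.exp (Δ / T)) ∧
    (1 / 2) * Real.exp (-Δ / T) < 1 / (1 + Real.exp (Δ / T)) := by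
  have hs : Finset.univ.sup' Finset.univ_nonempty u = Δ := by
    apply le_antisymm
    · apply Finset.sup'_le; intro y hy
      have hy' : y = a ∨ y = b := by rw [huniv] at hy; simpa using hy
      rcases hy' with h | h <;> simp [h, hua, hub, hΔ.le]
    · rw [← hua]; exact Finset.le_sup' u (Finset.mem_univ a)
  have heb : (Finset.univ.erase b : Finset V) = {a} := by
    rw [huniv]; ext x
    simp only [Finset.mem_erase, Finset.mem_insert, Finset.mem_singleton]
    constructor
    · rintro ⟨h1, h2 | h2⟩
      · exact h2
      · exact absurd h2 h1
    · rintro rfl; exact ⟨hab, Or.inl rfl⟩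
  have hea : (Finset.univ.erase a : Finset V) = {b} := by
    rw [huniv]; ext x
    simp only [Finset.mem_erase, Finset.mem_insert, Finset.mem_singleton]
    constructor
    · rintro ⟨h1, h2 | h2⟩
      · exact absurd h2 h1
      · exact h2
    · rintro rfl; exact ⟨hab.symm, Or.inr rfl⟩
  have hexp : 0 < Real.exp (Δ / T) := Real.exp_pos _
  have hone : 1 < Real.exp (Δ / T) := by
    have : (0:ℝ) < Δ / T := by positivity
    calc (1:ℝ) = Real.exp 0 := Real.exp_zero.symm
    _ < Real.exp (Δ / T) := Real.exp_lt_exp.mpr this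
  refine ⟨?_, ?_, ?_, ?_⟩
  · rw [PF, hs, heb]
    simp only [Finset.prod_singleton, hua, hub]
    rw [pf_integ_aux, sq, ← Real.exp_add, ← Real.exp_add]
    rw [show (0 - Δ) / T = -Δ / T by ring,
        show (Δ - 0) / T + (-Δ / T + -Δ / T) = -Δ / T by ring]
    ring
  · rw [PF, hs, hea]
    simp only [Finset.prod_singleton, hua, hub]
    rw [pf_integ_aux, sq, ← Real.exp_add, ← Real.exp_add]
    rw [show (Δ - Δ) / T = 0 by simp,
        show (0 - Δ) / T + (0 + 0) = -Δ / T by ring]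
    simp [Real.exp_zero]; ring
  · rw [softmax, huniv]
    rw [Finset.sum_insert (by simp [hab]), Finset.sum_singleton, hua, hub]
    rw [zero_div, Real.exp_zero, add_comm]
  · rw [neg_div, Real.exp_neg]
    rw [show (1:ℝ) / 2 * (Real.exp (Δ / T))⁻¹ = 1 / (2 * Real.exp (Δ / T)) by ring]
    rw [div_lt_div_iff₀ (by positivity) (by positivity)]
    linarith
end

section
/- Uniform case of the watermark score: let V be a finite vocabulary of size k ≥ 1, let the logits u : V → ℝ be constant, let (r_y)_{y∈V} be i.i.d. Uniform(0,1), and let ŵ = argmax_{y∈V} ( u(y) − log r_y ). Then E[ −log r_{ŵ} ] = H_k = 1 + 1/2 + ⋯ + 1/k. In particular, each fixed token w satisfies E[ (−log r_w) · 1{ŵ = w} ] = H_k / k, i.e., ∫₀¹ (−log r)(1 − r)^{k−1} dr = H_k / k. -/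
open Finset MeasureTheory

/-- A choice of a maximizer of `f` over the (nonempty, finite) type `V`. -/
noncomputable def argmaxOn {V : Type*} [Fintype V] [Nonempty V] (f : V → ℝ) : V :=
  (Finset.exists_max_image Finset.univ f Finset.univ_nonempty).choose

/-- The `k`-th harmonic number `H_k = 1 + 1/2 + ⋯ + 1/k`, as a real number. -/
noncomputable def harmonicR (k : ℕ) : ℝ := ∑ i ∈ Finset.range k, 1 / (i + 1 : ℝ)

open Real Set
open scoped ENNReal NNReal
set_option linter.unusedSectionVars false
set_option maxHeartbeats 1000000

-- analytic core

-- integrability of the integrand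
lemma pf_intervalIntegrable (k : ℕ) :
    IntervalIntegrable (fun s : ℝ => (-Real.log s) * (1 - s) ^ (k - 1)) volume 0 1 := by
  have hg : IntervalIntegrable (fun s : ℝ => 2 * s ^ (-(1/2) : ℝ)) volume 0 1 :=
    (intervalIntegral.intervalIntegrable_rpow' (by norm_num)).const_mul 2
  refine hg.mono_fun ?_ ?_
  · exact (Real.measurable_log.neg.mul ((measurable_id'.const_sub 1).pow_const _)).aestronglyMeasurable
  · rw [Filter.EventuallyLE, ae_restrict_iff' measurableSet_uIoc]
    filter_upwards with s hs
    rw [Set.uIoc_of_le (by norm_num : (0:ℝ) ≤ 1)] at hs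
    obtain ⟨h0, h1⟩ := hs
    have hlog : 0 ≤ -Real.log s := by
      simpa using Real.log_nonpos h0.le h1
    have hpow : 0 ≤ (1 - s) ^ (k-1) := pow_nonneg (by linarith) _
    have hpow1 : (1 - s) ^ (k-1) ≤ 1 := pow_le_one₀ (by linarith) (by linarith)
    have hb : -Real.log s ≤ 2 * s ^ (-(1/2) : ℝ) := by
      have h2 : Real.log (s ^ (-(1/2) : ℝ)) ≤ s ^ (-(1/2) : ℝ) - 1 :=
        Real.log_le_sub_one_of_pos (Real.rpow_pos_of_pos h0 _)
      rw [Real.log_rpow h0] at h2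
      nlinarith [Real.rpow_pos_of_pos h0 (-(1/2) : ℝ)]
    have hbn : (0:ℝ) ≤ 2 * s ^ (-(1/2) : ℝ) := by positivity
    rw [Real.norm_eq_abs, Real.norm_eq_abs, abs_of_nonneg (mul_nonneg hlog hpow),
      abs_of_nonneg hbn]
    nlinarith

lemma pf_integral_eval (k : ℕ) (hk : 1 ≤ k) :
    ∫ r in (0:ℝ)..1, (-Real.log r) * (1 - r) ^ (k - 1) = harmonicR k / k := by
  -- antiderivative
  set F : ℝ → ℝ := fun s =>
    (1/(k:ℝ)) * ∑ j ∈ Finset.range k,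
      (-(s * Real.log s) * (1 - s) ^ j + (1 - (1 - s) ^ (j+1)) / (j+1)) with hF
  have hk0 : (k:ℝ) ≠ 0 := by positivity
  have hcont : Continuous F := by
    apply continuous_const.mul
    refine continuous_finset_sum _ fun j _ => ?_
    exact ((Real.continuous_mul_log.neg.mul ((continuous_const.sub continuous_id').pow j))).add
      ((continuous_const.sub ((continuous_const.sub continuous_id').pow (j+1))).div_const _)
  have hderiv : ∀ s ∈ Set.Ioo (0:ℝ) 1,
      HasDerivAt F ((-Real.log s) * (1 - s) ^ (k-1)) s := by
    intro s hs
    have hs0 : s ≠ 0 := ne_of_gt hs.1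
    have key : ∀ j : ℕ, HasDerivAt
        (fun s : ℝ => -(s * Real.log s) * (1 - s) ^ j + (1 - (1 - s) ^ (j+1)) / (j+1))
        ((-Real.log s) * ((j+1) * (1-s)^j) - (-Real.log s) * (j * (1-s)^(j-1))) s := by
      intro j
      have h1 : HasDerivAt (fun s : ℝ => s * Real.log s) (Real.log s + 1) s :=
        Real.hasDerivAt_mul_log hs0
      have h2 : HasDerivAt (fun s : ℝ => (1 - s) ^ j) (-(j * (1-s)^(j-1))) s := by
        have := ((hasDerivAt_pow j (1 - s)).comp s ((hasDerivAt_const s (1:ℝ)).sub (hasDerivAt_id s)))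
        simpa [Function.comp_def, mul_comm, mul_assoc, mul_left_comm] using this
      have h3 : HasDerivAt (fun s : ℝ => (1 - s) ^ (j+1)) (-((j+1) * (1-s)^j)) s := by
        have := ((hasDerivAt_pow (j+1) (1 - s)).comp s ((hasDerivAt_const s (1:ℝ)).sub (hasDerivAt_id s)))
        simpa [Function.comp_def, mul_comm, mul_assoc, mul_left_comm] using this
      have h4 : HasDerivAt (fun s : ℝ => (1 - (1 - s) ^ (j+1)) / (j+1))
          ((j+1) * (1-s)^j / (j+1)) s := by
        simpa using (((hasDerivAt_const s (1:ℝ)).sub h3).div_const ((j:ℝ)+1))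
      have h5 := (h1.neg.mul h2).add h4
      refine (h5.congr_deriv ?_ :)
      symm
      have hj : ((j:ℝ)+1) ≠ 0 := by positivity
      field_simp
      cases j with
      | zero => simp
      | succ n =>
        simp only [Nat.add_sub_cancel, Pi.neg_apply]
        ring
    have hsum : HasDerivAt F
        ((1/(k:ℝ)) * ∑ j ∈ Finset.range k,
          ((-Real.log s) * ((j+1) * (1-s)^j) - (-Real.log s) * (j * (1-s)^(j-1)))) s := by
      exact (HasDerivAt.fun_sum fun j _ => key j).const_mul _
    convert hsum using 1
    have tele : ∑ j ∈ Finset.range k,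
        ((-Real.log s) * ((j+1) * (1-s)^j) - (-Real.log s) * (j * (1-s)^(j-1)))
        = -Real.log s * (k * (1-s)^(k-1)) := by
      have h := Finset.sum_range_sub (fun m : ℕ => -Real.log s * (m * (1-s)^(m-1))) k
      simp only [Nat.cast_zero, zero_mul, mul_zero, sub_zero] at h
      rw [← h]
      refine Finset.sum_congr rfl fun j _ => ?_
      push_cast [Nat.add_sub_cancel]
      ring
    rw [tele]
    field_simp
  have heval := intervalIntegral.integral_eq_sub_of_hasDeriv_right_of_le (by norm_num : (0:ℝ) ≤ 1)
    (hcont.continuousOn) (fun s hs => (hderiv s hs).hasDerivWithinAt) (pf_intervalIntegrable k)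
  rw [heval]
  have hF1 : F 1 = harmonicR k / k := by
    simp only [hF, harmonicR]
    rw [div_eq_mul_inv, mul_comm]
    congr 1
    · refine Finset.sum_congr rfl fun j _ => ?_
      norm_num
    · simp
  have hF0 : F 0 = 0 := by
    simp [hF]
  rw [hF1, hF0, sub_zero]
lemma argmaxOn_le {V : Type*} [Fintype V] [Nonempty V] (f : V → ℝ) (y : V) :
    f y ≤ f (argmaxOn f) :=
  (Finset.exists_max_image Finset.univ f Finset.univ_nonempty).choose_spec.2 y (Finset.mem_univ y)

section Setup
variable {V : Type*} [Fintype V] [DecidableEq V] (w : V)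

noncomputable abbrev nuR : Measure ℝ := volume.restrict (Set.Ioo (0 : ℝ) 1)

instance : IsProbabilityMeasure (nuR) := by
  constructor
  rw [Measure.restrict_apply_univ, Real.volume_Ioo]
  norm_num

instance : Unique {y : V // y = w} :=
  ⟨⟨⟨w, rfl⟩⟩, by rintro ⟨x, rfl⟩; rfl⟩

noncomputable def eW : (V → ℝ) ≃ᵐ ℝ × ({y : V // ¬ y = w} → ℝ) :=
  (MeasurableEquiv.piEquivPiSubtypeProd (fun _ : V => ℝ) (fun y => y = w)).trans
    ((MeasurableEquiv.funUnique {y : V // y = w} ℝ).prodCongr (MeasurableEquiv.refl _))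

lemma eW_apply (r : V → ℝ) : eW w r = (r w, fun y => r y.val) := rfl

lemma eW_symm_apply (p : ℝ × ({y : V // ¬ y = w} → ℝ)) (y : V) :
    (eW w).symm p y = if h : y = w then p.1 else p.2 ⟨y, h⟩ := rfl

lemma mpW : MeasurePreserving (eW w) (unifPi V)
    (nuR.prod (Measure.pi fun _ : {y : V // ¬ y = w} => nuR)) := by
  have h1 := measurePreserving_piEquivPiSubtypeProd (fun _ : V => nuR) (fun y => y = w)
  have h2 : MeasurePreserving
      ((MeasurableEquiv.funUnique {y : V // y = w} ℝ).prodCongr (MeasurableEquiv.refl _))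
      ((Measure.pi fun _ : {y : V // y = w} => nuR).prod
        (Measure.pi fun _ : {y : V // ¬ y = w} => nuR))
      (nuR.prod (Measure.pi fun _ : {y : V // ¬ y = w} => nuR)) :=
    (measurePreserving_funUnique nuR _).prod (MeasurePreserving.id _)
  have : (Subtype.fintype fun y : V => y = w) = Fintype.subtypeEq w := Subsingleton.elim _ _
  rw [this] at h1
  exact h2.comp h1

end Setup

section AE
variable {V : Type*} [Fintype V] [DecidableEq V]

lemma null_coord (y : V) : unifPi V {r : V → ℝ | r y ∉ Set.Ioo (0:ℝ) 1} = 0 := by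
  have hset : {r : V → ℝ | r y ∉ Set.Ioo (0:ℝ) 1}
      = Set.pi Set.univ (fun z => if z = y then (Set.Ioo (0:ℝ) 1)ᶜ else Set.univ) := by
    ext r
    simp only [Set.mem_setOf_eq, Set.mem_pi, Set.mem_univ, forall_true_left]
    constructor
    · intro h z
      by_cases hz : z = y
      · subst hz; simp [h]
      · simp [hz]
    · intro h
      have := h y
      simpa using this
  rw [unifPi, hset, Measure.pi_pi]
  refine Finset.prod_eq_zero (Finset.mem_univ y) ?_
  rw [if_pos rfl, Measure.restrict_apply measurableSet_Ioo.compl]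
  simp

lemma null_eq (y z : V) (hyz : y ≠ z) : unifPi V {r : V → ℝ | r y = r z} = 0 := by
  have hz' : ¬ z = y := fun h => hyz h.symm
  set S : Set (ℝ × ({a : V // ¬ a = y} → ℝ)) := {p | p.1 = p.2 ⟨z, hz'⟩} with hS
  have hSm : MeasurableSet S :=
    measurableSet_eq_fun measurable_fst ((measurable_pi_apply _).comp measurable_snd)
  have hpre : {r : V → ℝ | r y = r z} = eW y ⁻¹' S := by
    ext r
    simp only [Set.mem_preimage, eW_apply, hS, Set.mem_setOf_eq]
  rw [hpre, (mpW y).measure_preimage hSm.nullMeasurableSet]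
  rw [Measure.prod_apply hSm]
  have : ∀ s : ℝ, (Measure.pi fun _ : {a : V // ¬ a = y} => nuR)
      (Prod.mk s ⁻¹' S) = 0 := by
    intro s
    have : Prod.mk s ⁻¹' S = {t : {a : V // ¬ a = y} → ℝ | t ⟨z, hz'⟩ = s} := by
      ext t; simp [hS, eq_comm]
    rw [this]
    exact Measure.pi_hyperplane (fun _ : {a : V // ¬ a = y} => nuR) ⟨z, hz'⟩ s
  simp [this]

lemma ae_good : ∀ᵐ r ∂(unifPi V),
    (∀ y : V, r y ∈ Set.Ioo (0:ℝ) 1) ∧ ∀ y z : V, y ≠ z → r y ≠ r z := by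
  have h1 : ∀ᵐ r ∂(unifPi V), ∀ y : V, r y ∈ Set.Ioo (0:ℝ) 1 := by
    rw [ae_all_iff]
    intro y
    exact (ae_iff.2 (by simpa using null_coord y))
  have h2 : ∀ᵐ r ∂(unifPi V), ∀ y z : V, y ≠ z → r y ≠ r z := by
    rw [ae_all_iff]
    intro y
    rw [ae_all_iff]
    intro z
    rcases eq_or_ne y z with h | h
    · simp [h]
    · have hae : ∀ᵐ r ∂(unifPi V), ¬ (r y = r z) := by
        apply ae_iff.2
        simpa using null_eq y z h
      filter_upwards [hae] with r hr _
      exact hr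
  exact h1.and h2

end AE

section Main
variable {V : Type*} [Fintype V] [DecidableEq V]

noncomputable def gW (w : V) (r : V → ℝ) : ℝ :=
  (-Real.log (r w)) * ∏ y : {y : V // ¬ y = w}, (if r w < r y.val then (1:ℝ) else 0)

lemma gW_meas (w : V) : Measurable (gW w) := by
  apply Measurable.mul
  · exact (Real.measurable_log.comp (measurable_pi_apply w)).neg
  · exact Finset.measurable_prod _ fun y _ => Measurable.ite
      (measurableSet_lt (measurable_pi_apply w) (measurable_pi_apply y.val))
      measurable_const measurable_const

lemma lintegral_gW (k : ℕ) (hk : 1 ≤ k) (hcard : Fintype.card V = k) (w : V)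
    (hval : ∫ s in Set.Ioo (0:ℝ) 1, (-Real.log s) * (1 - s)^(k-1) = harmonicR k / k)
    (hint : IntegrableOn (fun s : ℝ => (-Real.log s) * (1 - s)^(k-1)) (Set.Ioo (0:ℝ) 1)) :
    ∫⁻ r, ENNReal.ofReal (gW w r) ∂(unifPi V) = ENNReal.ofReal (harmonicR k / k) := by
  have hmeas : Measurable fun r : V → ℝ => ENNReal.ofReal (gW w r) :=
    (gW_meas w).ennreal_ofReal
  set π2 : Measure ({y : V // ¬ y = w} → ℝ) := Measure.pi fun _ => nuR with hπ2
  have htrans := (MeasurePreserving.symm (eW w) (mpW w)).lintegral_comp hmeas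
  rw [← htrans]
  rw [lintegral_prod (fun p => ENNReal.ofReal (gW w ((eW w).symm p))) (hmeas.comp (eW w).symm.measurable).aemeasurable]
  have hcard2 : Fintype.card {y : V // ¬ y = w} = k - 1 := by
    rw [Fintype.card_subtype_compl, Fintype.card_subtype_eq, hcard]
  have hinner : ∀ s ∈ Set.Ioo (0:ℝ) 1,
      (∫⁻ t, ENNReal.ofReal (gW w ((eW w).symm (s, t))) ∂π2)
        = ENNReal.ofReal ((-Real.log s) * (1 - s)^(k-1)) := by
    intro s hs
    have hlog : 0 ≤ -Real.log s := by simpa using Real.log_nonpos hs.1.le hs.2.le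
    have hg : ∀ t : {y : V // ¬ y = w} → ℝ, gW w ((eW w).symm (s, t))
        = (-Real.log s) * ∏ y : {y : V // ¬ y = w}, (if s < t y then (1:ℝ) else 0) := by
      intro t
      have h1 : (eW w).symm (s, t) w = s := by rw [eW_symm_apply, dif_pos rfl]
      have h2 : ∀ y : {y : V // ¬ y = w}, (eW w).symm (s, t) y.val = t y := by
        intro y
        rw [eW_symm_apply, dif_neg y.prop]
      unfold gW
      rw [h1]
      congr 1
      exact Finset.prod_congr rfl fun y _ => by rw [h2]
    simp only [hg]
    have hofr : ∀ t : {y : V // ¬ y = w} → ℝ,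
        ENNReal.ofReal ((-Real.log s) * ∏ y : {y : V // ¬ y = w}, (if s < t y then (1:ℝ) else 0))
        = ENNReal.ofReal (-Real.log s) *
            (Set.univ.pi fun _ : {y : V // ¬ y = w} => Set.Ioi s).indicator
              (fun _ => (1:ℝ≥0∞)) t := by
      intro t
      rw [ENNReal.ofReal_mul hlog]
      congr 1
      rw [Finset.prod_boole]
      by_cases h : ∀ y : {y : V // ¬ y = w}, s < t y
      · rw [if_pos (by simpa using h), Set.indicator_of_mem (by simpa [Set.mem_pi] using h)]
        simp
      · rw [if_neg (by simpa using h), Set.indicator_of_notMem (by simpa [Set.mem_pi] using h)]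
        simp
    simp only [hofr]
    rw [lintegral_const_mul' _ _ ENNReal.ofReal_ne_top]
    rw [lintegral_indicator (MeasurableSet.univ_pi fun _ => measurableSet_Ioi)]
    simp only [lintegral_const, Measure.restrict_apply MeasurableSet.univ, Set.univ_inter,
      one_mul]
    have hνIoi : nuR (Set.Ioi s) = ENNReal.ofReal (1 - s) := by
      rw [Measure.restrict_apply measurableSet_Ioi]
      have : Set.Ioi s ∩ Set.Ioo (0:ℝ) 1 = Set.Ioo s 1 := by
        ext x
        simp only [Set.mem_inter_iff, Set.mem_Ioi, Set.mem_Ioo]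
        constructor
        · rintro ⟨h1, _, h3⟩; exact ⟨h1, h3⟩
        · rintro ⟨h1, h2⟩; exact ⟨h1, hs.1.trans h1, h2⟩
      rw [this, Real.volume_Ioo]
    rw [hπ2, Measure.pi_pi]
    rw [Finset.prod_const, hνIoi, ← ENNReal.ofReal_pow (by linarith [hs.2] : (0:ℝ) ≤ 1 - s)]
    rw [← ENNReal.ofReal_mul hlog]
    congr 2
    rw [Finset.card_univ, hcard2]
  calc ∫⁻ s, (∫⁻ t, ENNReal.ofReal (gW w ((eW w).symm (s, t))) ∂π2) ∂nuR
      = ∫⁻ s, ENNReal.ofReal ((-Real.log s) * (1 - s)^(k-1)) ∂nuR := by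
        apply lintegral_congr_ae
        filter_upwards [ae_restrict_mem measurableSet_Ioo] with s hs
        exact hinner s hs
    _ = ENNReal.ofReal (harmonicR k / k) := by
        rw [← ofReal_integral_eq_lintegral_ofReal hint ?_]
        · rw [hval]
        · filter_upwards [ae_restrict_mem measurableSet_Ioo] with s hs
          have hlog : 0 ≤ -Real.log s := by simpa using Real.log_nonpos hs.1.le hs.2.le
          exact mul_nonneg hlog (pow_nonneg (by linarith [hs.2]) _)

end Main

section Final
variable {V : Type*} [Fintype V] [DecidableEq V]

lemma harmonicR_nonneg (k : ℕ) : 0 ≤ harmonicR k :=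
  Finset.sum_nonneg fun i _ => by positivity

lemma gW_nonneg_ae : ∀ᵐ r ∂(unifPi V), ∀ w : V, 0 ≤ gW w r := by
  filter_upwards [ae_good] with r hr w
  have h := (hr.1 w)
  have hlog : 0 ≤ -Real.log (r w) := by simpa using Real.log_nonpos h.1.le h.2.le
  exact mul_nonneg hlog (Finset.prod_nonneg fun y _ => by split <;> norm_num)

lemma integrable_gW (k : ℕ) (hk : 1 ≤ k) (hcard : Fintype.card V = k) (w : V)
    (hval : ∫ s in Set.Ioo (0:ℝ) 1, (-Real.log s) * (1 - s)^(k-1) = harmonicR k / k)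
    (hint : IntegrableOn (fun s : ℝ => (-Real.log s) * (1 - s)^(k-1)) (Set.Ioo (0:ℝ) 1)) :
    Integrable (gW w) (unifPi V) := by
  refine ⟨(gW_meas w).aestronglyMeasurable, ?_⟩
  have hnn := gW_nonneg_ae (V := V)
  have heq : ∫⁻ r, ‖gW w r‖ₑ ∂(unifPi V)
      = ∫⁻ r, ENNReal.ofReal (gW w r) ∂(unifPi V) := by
    apply lintegral_congr_ae
    filter_upwards [hnn] with r hr
    rw [Real.enorm_eq_ofReal (hr w)]
  rw [HasFiniteIntegral, heq, lintegral_gW k hk hcard w hval hint]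
  exact ENNReal.ofReal_lt_top

lemma integral_gW (k : ℕ) (hk : 1 ≤ k) (hcard : Fintype.card V = k) (w : V)
    (hval : ∫ s in Set.Ioo (0:ℝ) 1, (-Real.log s) * (1 - s)^(k-1) = harmonicR k / k)
    (hint : IntegrableOn (fun s : ℝ => (-Real.log s) * (1 - s)^(k-1)) (Set.Ioo (0:ℝ) 1)) :
    ∫ r, gW w r ∂(unifPi V) = harmonicR k / k := by
  rw [integral_eq_lintegral_of_nonneg_ae
      (by filter_upwards [gW_nonneg_ae (V := V)] with r hr using hr w)
      (gW_meas w).aestronglyMeasurable,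
    lintegral_gW k hk hcard w hval hint,
    ENNReal.toReal_ofReal (div_nonneg (harmonicR_nonneg k) (Nat.cast_nonneg k))]

-- a.e. identification of the argmax with the coordinate-minimizer
lemma fW_ae_eq [Nonempty V] (u : V → ℝ) (c : ℝ) (hu : ∀ y : V, u y = c) (w : V) :
    (fun r : V → ℝ =>
        (if (argmaxOn fun y => u y - Real.log (r y)) = w then -Real.log (r w) else 0))
      =ᵐ[unifPi V] gW w := by
  filter_upwards [ae_good] with r hr
  have hiff : (argmaxOn fun y => u y - Real.log (r y)) = w ↔ ∀ y : V, y ≠ w → r w < r y := by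
    constructor
    · intro hm y hyw
      have h := argmaxOn_le (fun y => u y - Real.log (r y)) y
      rw [hm, hu, hu] at h
      have hle : Real.log (r w) ≤ Real.log (r y) := by linarith
      have : r w ≤ r y :=
        (Real.log_le_log_iff (hr.1 w).1 (hr.1 y).1).1 hle
      exact lt_of_le_of_ne this (hr.2 w y (fun h' => hyw h'.symm))
    · intro hlt
      by_contra hne
      have h := argmaxOn_le (fun y => u y - Real.log (r y)) w
      set m := argmaxOn fun y => u y - Real.log (r y) with hm
      rw [hu, hu] at h
      have h2 : Real.log (r m) ≤ Real.log (r w) := by linarith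
      have h3 : r m ≤ r w := (Real.log_le_log_iff (hr.1 m).1 (hr.1 w).1).1 h2
      exact absurd h3 (not_le.2 (hlt m hne))
  by_cases hm : (argmaxOn fun y => u y - Real.log (r y)) = w
  · rw [if_pos hm]
    have hlt := hiff.1 hm
    unfold gW
    rw [Finset.prod_eq_one fun y _ => if_pos (hlt y.val y.prop), mul_one]
  · rw [if_neg hm]
    obtain ⟨y, hyw, hy⟩ := by
      simpa [not_forall] using (hiff.not.1 hm)
    unfold gW
    rw [Finset.prod_eq_zero (Finset.mem_univ (⟨y, hyw⟩ : {y : V // ¬ y = w})), mul_zero]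
    rw [if_neg (not_lt.2 hy)]

end Final


/-- Uniform case of the PF watermark score: with constant logits on a vocabulary of
size `k`, `E[−log r_ŵ] = H_k`; moreover each fixed token `w` contributes
`E[(−log r_w)·1{ŵ = w}] = H_k / k`, i.e. `∫₀¹ (−log r)(1−r)^{k−1} dr = H_k / k`. -/
theorem pf_watermark_score_uniform {V : Type*} [Fintype V] [DecidableEq V] [Nonempty V]
    (k : ℕ) (hk : 1 ≤ k) (hcard : Fintype.card V = k)
    (u : V → ℝ) (c : ℝ) (hu : ∀ y : V, u y = c) :
    (∫ r : V → ℝ, -Real.log (r (argmaxOn fun y => u y - Real.log (r y))) ∂(unifPi V)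
        = harmonicR k) ∧
    (∀ w : V,
      ∫ r : V → ℝ,
          (if (argmaxOn fun y => u y - Real.log (r y)) = w then -Real.log (r w) else 0)
        ∂(unifPi V) = harmonicR k / k) ∧
    (∫ r in (0:ℝ)..1, (-Real.log r) * (1 - r) ^ (k - 1) = harmonicR k / k) := by
  have hval : ∫ s in Set.Ioo (0:ℝ) 1, (-Real.log s) * (1 - s)^(k-1) = harmonicR k / k := by
    rw [← integral_Ioc_eq_integral_Ioo, ← intervalIntegral.integral_of_le (zero_le_one),
      pf_integral_eval k hk]
  have hint : IntegrableOn (fun s : ℝ => (-Real.log s) * (1 - s)^(k-1)) (Set.Ioo (0:ℝ) 1) := by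
    have h := pf_intervalIntegrable k
    rw [intervalIntegrable_iff, Set.uIoc_of_le (zero_le_one' ℝ)] at h
    exact h.mono_set Set.Ioo_subset_Ioc_self
  have part2 : ∀ w : V,
      ∫ r : V → ℝ,
          (if (argmaxOn fun y => u y - Real.log (r y)) = w then -Real.log (r w) else 0)
        ∂(unifPi V) = harmonicR k / k := by
    intro w
    rw [integral_congr_ae (fW_ae_eq u c hu w), integral_gW k hk hcard w hval hint]
  refine ⟨?_, part2, pf_integral_eval k hk⟩
  have hpt : ∀ r : V → ℝ, -Real.log (r (argmaxOn fun y => u y - Real.log (r y)))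
      = ∑ w ∈ Finset.univ,
          (if (argmaxOn fun y => u y - Real.log (r y)) = w then -Real.log (r w) else 0) := by
    intro r
    rw [Finset.sum_ite_eq]
    simp
  simp only [hpt]
  rw [integral_finset_sum _ fun w _ =>
    (integrable_gW k hk hcard w hval hint).congr (fW_ae_eq u c hu w).symm]
  have : ∀ w : V, w ∈ Finset.univ →
      (∫ r : V → ℝ,
        (if (argmaxOn fun y => u y - Real.log (r y)) = w then -Real.log (r w) else 0)
        ∂(unifPi V)) = harmonicR k / k := fun w _ => part2 w
  rw [Finset.sum_congr rfl this, Finset.sum_const, Finset.card_univ, hcard, nsmul_eq_mul]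
  field_simp
end

section
/- Two-token Gumbel watermark score: let V = {a, b}, Δ > 0, T > 0, logits u(a) = Δ, u(b) = 0, let r_a, r_b be i.i.d. Uniform(0,1), and let ŵ = argmax_{w∈V} ( u(w)/T − log log(1/r_w) ). Then the expected Gumbel test score satisfies E[ −log(1 − r_{ŵ}) ] = H(1 + e^{−Δ/T}) / (1 + e^{−Δ/T}) + H(1 + e^{Δ/T}) / (1 + e^{Δ/T}), where H(z) = ∫₀¹ (1 − x^z)/(1 − x) dx is the generalized harmonic number. -/
open Finset MeasureTheory
open scoped ENNReal

/-- The generalized harmonic number `H(z) = ∫₀¹ (1 − x^z)/(1 − x) dx`. -/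
noncomputable def genHarmonic (z : ℝ) : ℝ :=
  ∫ x in (0:ℝ)..1, (1 - x ^ z) / (1 - x)

noncomputable abbrev μ01 : Measure ℝ := volume.restrict (Set.Ioo (0:ℝ) 1)

lemma isProb_μ01 : IsProbabilityMeasure μ01 :=
  ⟨by simp [Measure.restrict_apply_univ, Real.volume_Ioo]⟩

lemma log_int {x : ℝ} (hx0 : 0 ≤ x) (hx1 : x < 1) :
    ∫ t in (0:ℝ)..x, (1 - t)⁻¹ = -Real.log (1 - x) := by
  have hne : ∀ t ∈ Set.uIcc (0:ℝ) x, (1:ℝ) - t ≠ 0 := by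
    intro t ht
    rw [Set.uIcc_of_le hx0] at ht
    have := ht.2
    intro h
    nlinarith
  have hderiv : ∀ t ∈ Set.uIcc (0:ℝ) x,
      HasDerivAt (fun s => -Real.log (1 - s)) ((1 - t)⁻¹) t := by
    intro t ht
    have h1 := (Real.hasDerivAt_log (hne t ht)).comp t
      ((hasDerivAt_const t (1:ℝ)).sub (hasDerivAt_id t))
    have h2 := h1.neg
    convert h2 using 1
    · rfl
    · rfl
    · rfl
    · ring
  have hint : IntervalIntegrable (fun t => (1 - t)⁻¹) volume 0 x := by
    apply ContinuousOn.intervalIntegrable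
    exact (continuousOn_const.sub continuousOn_id).inv₀ hne
  have := intervalIntegral.integral_eq_sub_of_hasDerivAt hderiv hint
  rw [this]
  simp

lemma harmonic_integrand_nonneg {z t : ℝ} (hz : 0 ≤ z) (ht0 : 0 ≤ t) (ht1 : t ≤ 1) :
    0 ≤ (1 - t ^ z) / (1 - t) :=
  div_nonneg (by nlinarith [Real.rpow_le_one ht0 ht1 hz]) (by linarith)

lemma harmonic_nonneg {z : ℝ} (hz : 0 ≤ z) : 0 ≤ genHarmonic z := by
  rw [genHarmonic]
  apply intervalIntegral.integral_nonneg zero_le_one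
  intro t ht
  exact harmonic_integrand_nonneg hz ht.1 ht.2

lemma harmonic_integrand_le {z t : ℝ} (hz : 1 ≤ z) (ht : t ∈ Set.Ioo (0:ℝ) 1) :
    (1 - t ^ z) / (1 - t) ≤ z := by
  have hb := one_add_mul_self_le_rpow_one_add (by linarith [ht.1] : (-1:ℝ) ≤ t - 1) hz
  have h1 : (1:ℝ) + (t - 1) = t := by ring
  rw [h1] at hb
  have ht1 : (0:ℝ) < 1 - t := by linarith [ht.2]
  rw [div_le_iff₀ ht1]
  nlinarith

lemma harmonic_integrableOn {z : ℝ} (hz : 1 ≤ z) :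
    IntegrableOn (fun t => (1 - t ^ z) / (1 - t)) (Set.Ioo (0:ℝ) 1) := by
  have hmeas : Measurable fun t : ℝ => (1 - t ^ z) / (1 - t) :=
    (measurable_const.sub (Real.continuous_rpow_const (by linarith)).measurable).div
      (measurable_const.sub measurable_id)
  refine Integrable.mono' (integrable_const z) hmeas.aestronglyMeasurable ?_
  filter_upwards [ae_restrict_mem measurableSet_Ioo] with t ht
  rw [Real.norm_eq_abs, abs_of_nonneg (harmonic_integrand_nonneg (by linarith) ht.1.le ht.2.le)]
  exact harmonic_integrand_le hz ht

lemma genHarmonic_eq_setIntegral (z : ℝ) :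
    genHarmonic z = ∫ t in Set.Ioo (0:ℝ) 1, (1 - t ^ z) / (1 - t) ∂volume := by
  rw [genHarmonic, intervalIntegral.integral_of_le zero_le_one, integral_Ioc_eq_integral_Ioo]

lemma keyI {β : ℝ} (hβ : 0 < β) :
    ∫⁻ x in Set.Ioo (0:ℝ) 1, ENNReal.ofReal (x ^ β * (-Real.log (1 - x))) ∂volume
      = ENNReal.ofReal (genHarmonic (β + 1) / (β + 1)) := by
  haveI : IsProbabilityMeasure μ01 := isProb_μ01
  set F2 : ℝ × ℝ → ℝ≥0∞ :=
    fun p => if p.2 < p.1 then ENNReal.ofReal (p.1 ^ β * (1 - p.2)⁻¹) else 0 with hF2def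
  have hmeasF2 : Measurable F2 := by
    apply Measurable.ite (measurableSet_lt measurable_snd measurable_fst) _ measurable_const
    exact ENNReal.measurable_ofReal.comp
      (((Real.continuous_rpow_const hβ.le).measurable.comp measurable_fst).mul
        ((measurable_const.sub measurable_snd).inv))
  -- first order: integrate in t first
  have evalA : ∫⁻ p, F2 p ∂(μ01.prod μ01)
      = ∫⁻ x in Set.Ioo (0:ℝ) 1, ENNReal.ofReal (x ^ β * (-Real.log (1 - x))) ∂volume := by
    rw [lintegral_prod _ hmeasF2.aemeasurable]
    apply lintegral_congr_ae
    filter_upwards [ae_restrict_mem measurableSet_Ioo] with x hx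
    have hseteq : Set.Iio x ∩ Set.Ioo (0:ℝ) 1 = Set.Ioo 0 x := by
      ext t
      simp only [Set.mem_inter_iff, Set.mem_Iio, Set.mem_Ioo]
      constructor
      · rintro ⟨h1, h2, _⟩; exact ⟨h2, h1⟩
      · rintro ⟨h1, h2⟩; exact ⟨h2, h1, lt_trans h2 hx.2⟩
    have hint : IntegrableOn (fun t => x ^ β * (1 - t)⁻¹) (Set.Ioo 0 x) := by
      apply IntegrableOn.mono_set _ Set.Ioo_subset_Icc_self
      apply ContinuousOn.integrableOn_Icc
      apply continuousOn_const.mul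
      apply (continuousOn_const.sub continuousOn_id).inv₀
      intro t ht h
      simp only [Pi.sub_apply, id_eq] at h
      nlinarith [ht.2, hx.2]
    have hnn : 0 ≤ᵐ[volume.restrict (Set.Ioo 0 x)] fun t => x ^ β * (1 - t)⁻¹ := by
      filter_upwards [ae_restrict_mem measurableSet_Ioo] with t ht
      exact mul_nonneg (Real.rpow_nonneg hx.1.le β)
        (inv_nonneg.2 (by linarith [ht.2, hx.2]))
    calc ∫⁻ t, F2 (x, t) ∂μ01
        = ∫⁻ t, (Set.Iio x).indicator (fun t => ENNReal.ofReal (x ^ β * (1 - t)⁻¹)) t ∂μ01 := by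
          apply lintegral_congr
          intro t
          by_cases h : t < x <;> simp [hF2def, Set.indicator, h]
      _ = ∫⁻ t in Set.Iio x, ENNReal.ofReal (x ^ β * (1 - t)⁻¹) ∂μ01 := by
          rw [lintegral_indicator measurableSet_Iio]
      _ = ∫⁻ t in Set.Ioo 0 x, ENNReal.ofReal (x ^ β * (1 - t)⁻¹) ∂volume := by
          rw [Measure.restrict_restrict measurableSet_Iio, hseteq]
      _ = ENNReal.ofReal (∫ t in Set.Ioo 0 x, x ^ β * (1 - t)⁻¹ ∂volume) :=
          (ofReal_integral_eq_lintegral_ofReal hint hnn).symm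
      _ = ENNReal.ofReal (x ^ β * (-Real.log (1 - x))) := by
          rw [integral_const_mul, ← integral_Ioc_eq_integral_Ioo,
            ← intervalIntegral.integral_of_le hx.1.le, log_int hx.1.le hx.2]
  -- second order: integrate in x first
  have evalB : ∫⁻ p, F2 p ∂(μ01.prod μ01)
      = ∫⁻ t in Set.Ioo (0:ℝ) 1,
          ENNReal.ofReal ((1 - t ^ (β + 1)) / (β + 1) * (1 - t)⁻¹) ∂volume := by
    rw [lintegral_prod_symm _ hmeasF2.aemeasurable]
    apply lintegral_congr_ae
    filter_upwards [ae_restrict_mem measurableSet_Ioo] with t ht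
    have hseteq : Set.Ioi t ∩ Set.Ioo (0:ℝ) 1 = Set.Ioo t 1 := by
      ext x
      simp only [Set.mem_inter_iff, Set.mem_Ioi, Set.mem_Ioo]
      constructor
      · rintro ⟨h1, _, h3⟩; exact ⟨h1, h3⟩
      · rintro ⟨h1, h2⟩; exact ⟨h1, lt_trans ht.1 h1, h2⟩
    have hint : IntegrableOn (fun x => x ^ β * (1 - t)⁻¹) (Set.Ioo t 1) := by
      apply IntegrableOn.mono_set _ Set.Ioo_subset_Icc_self
      apply ContinuousOn.integrableOn_Icc
      exact (Real.continuous_rpow_const hβ.le).continuousOn.mul continuousOn_const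
    have hnn : 0 ≤ᵐ[volume.restrict (Set.Ioo t 1)] fun x => x ^ β * (1 - t)⁻¹ := by
      filter_upwards [ae_restrict_mem measurableSet_Ioo] with x hx
      exact mul_nonneg (Real.rpow_nonneg (le_trans ht.1.le hx.1.le) β)
        (inv_nonneg.2 (by linarith [ht.2]))
    calc ∫⁻ x, F2 (x, t) ∂μ01
        = ∫⁻ x, (Set.Ioi t).indicator (fun x => ENNReal.ofReal (x ^ β * (1 - t)⁻¹)) x ∂μ01 := by
          apply lintegral_congr
          intro x
          by_cases h : t < x <;> simp [hF2def, Set.indicator, h]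
      _ = ∫⁻ x in Set.Ioi t, ENNReal.ofReal (x ^ β * (1 - t)⁻¹) ∂μ01 := by
          rw [lintegral_indicator measurableSet_Ioi]
      _ = ∫⁻ x in Set.Ioo t 1, ENNReal.ofReal (x ^ β * (1 - t)⁻¹) ∂volume := by
          rw [Measure.restrict_restrict measurableSet_Ioi, hseteq]
      _ = ENNReal.ofReal (∫ x in Set.Ioo t 1, x ^ β * (1 - t)⁻¹ ∂volume) :=
          (ofReal_integral_eq_lintegral_ofReal hint hnn).symm
      _ = ENNReal.ofReal ((1 - t ^ (β + 1)) / (β + 1) * (1 - t)⁻¹) := by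
          rw [integral_mul_const, ← integral_Ioc_eq_integral_Ioo,
            ← intervalIntegral.integral_of_le ht.2.le,
            integral_rpow (Or.inl (by linarith : (-1:ℝ) < β)), Real.one_rpow]
  -- combine
  rw [← evalA, evalB]
  have hfun : (fun t : ℝ => (1 - t ^ (β + 1)) / (β + 1) * (1 - t)⁻¹)
      = fun t => ((1 - t ^ (β + 1)) / (1 - t)) / (β + 1) := by
    funext t; ring
  have hz : (1:ℝ) ≤ β + 1 := by linarith
  have hint2 : IntegrableOn (fun t => (1 - t ^ (β + 1)) / (β + 1) * (1 - t)⁻¹)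
      (Set.Ioo (0:ℝ) 1) := by
    rw [hfun]
    exact (harmonic_integrableOn hz).div_const _
  have hnn2 : 0 ≤ᵐ[volume.restrict (Set.Ioo (0:ℝ) 1)]
      fun t => (1 - t ^ (β + 1)) / (β + 1) * (1 - t)⁻¹ := by
    filter_upwards [ae_restrict_mem measurableSet_Ioo] with t ht
    have h1 := harmonic_integrand_nonneg (by linarith : (0:ℝ) ≤ β + 1) ht.1.le ht.2.le
    simp only [Pi.zero_apply]
    have heq : (1 - t ^ (β + 1)) / (β + 1) * (1 - t)⁻¹
        = ((1 - t ^ (β + 1)) / (1 - t)) / (β + 1) := by ring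
    rw [heq]
    exact div_nonneg h1 (by linarith)
  rw [← ofReal_integral_eq_lintegral_ofReal hint2 hnn2]
  congr 1
  rw [hfun]
  rw [integral_div, ← genHarmonic_eq_setIntegral]

lemma argmaxOn_spec {V : Type*} [Fintype V] [Nonempty V] (f : V → ℝ) (w : V) :
    f w ≤ f (argmaxOn f) :=
  (Finset.exists_max_image Finset.univ f Finset.univ_nonempty).choose_spec.2 w (Finset.mem_univ w)

lemma argmaxOn_eq_left {V : Type*} [Fintype V] [DecidableEq V] [Nonempty V] {a b : V}
    (huniv : (Finset.univ : Finset V) = {a, b}) {f : V → ℝ} (h : f b < f a) :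
    argmaxOn f = a := by
  have hm : argmaxOn f ∈ ({a, b} : Finset V) := huniv ▸ Finset.mem_univ _
  rcases Finset.mem_insert.1 hm with h1 | h1
  · exact h1
  · rw [Finset.mem_singleton] at h1
    exact absurd (argmaxOn_spec f a) (by rw [h1]; exact not_le.2 h)

lemma argmaxOn_eq_right {V : Type*} [Fintype V] [DecidableEq V] [Nonempty V] {a b : V}
    (huniv : (Finset.univ : Finset V) = {a, b}) {f : V → ℝ} (h : f a < f b) :
    argmaxOn f = b := by
  have hm : argmaxOn f ∈ ({a, b} : Finset V) := huniv ▸ Finset.mem_univ _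
  rcases Finset.mem_insert.1 hm with h1 | h1
  · exact absurd (argmaxOn_spec f b) (by rw [h1]; exact not_le.2 h)
  · exact Finset.mem_singleton.1 h1

lemma cond_iff {c x y : ℝ} (hx : x ∈ Set.Ioo (0:ℝ) 1) (hy : y ∈ Set.Ioo (0:ℝ) 1) :
    (-Real.log (Real.log (1/y)) < c - Real.log (Real.log (1/x))
      ↔ y < x ^ Real.exp (-c)) := by
  have hA : 0 < Real.log (1/x) := by
    rw [one_div, Real.log_inv]
    have := Real.log_neg hx.1 hx.2
    linarith
  have hB : 0 < Real.log (1/y) := by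
    rw [one_div, Real.log_inv]
    have := Real.log_neg hy.1 hy.2
    linarith
  constructor
  · intro h
    have h1 : Real.log (Real.log (1/x)) - c < Real.log (Real.log (1/y)) := by linarith
    have h2 : Real.exp (Real.log (Real.log (1/x)) - c) < Real.log (1/y) :=
      (Real.lt_log_iff_exp_lt hB).1 h1
    rw [Real.exp_sub, Real.exp_log hA] at h2
    -- h2 : log (1/x) / exp c < log (1/y)
    have h3 : Real.log (1/x) * Real.exp (-c) < Real.log (1/y) := by
      rwa [Real.exp_neg, ← div_eq_mul_inv]
    rw [one_div, Real.log_inv, one_div, Real.log_inv] at h3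
    have h4 : Real.log y < Real.log x * Real.exp (-c) := by nlinarith
    calc y = Real.exp (Real.log y) := (Real.exp_log hy.1).symm
      _ < Real.exp (Real.log x * Real.exp (-c)) := Real.exp_lt_exp.2 h4
      _ = x ^ Real.exp (-c) := (Real.rpow_def_of_pos hx.1 _).symm
  · intro h
    have h4 : Real.log y < Real.log x * Real.exp (-c) := by
      have h' : Real.exp (Real.log y) < Real.exp (Real.log x * Real.exp (-c)) := by
        rw [Real.exp_log hy.1, ← Real.rpow_def_of_pos hx.1]; exact h
      exact Real.exp_lt_exp.1 h'
    have h3 : Real.log (1/x) * Real.exp (-c) < Real.log (1/y) := by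
      rw [one_div, Real.log_inv, one_div, Real.log_inv]; nlinarith
    have h2 : Real.exp (Real.log (Real.log (1/x)) - c) < Real.log (1/y) := by
      rw [Real.exp_sub, Real.exp_log hA]
      rwa [Real.exp_neg, ← div_eq_mul_inv] at h3
    have h1 := (Real.lt_log_iff_exp_lt hB).2 h2
    linarith

lemma rpow_lt_iff {x y β γ : ℝ} (hx : 0 < x) (hy : 0 < y) (hβ : 0 < β) (hγ : 0 < γ)
    (hγβ : γ * β = 1) : x < y ^ γ ↔ x ^ β < y := by
  constructor
  · intro h
    have h1 := Real.rpow_lt_rpow hx.le h hβ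
    rwa [← Real.rpow_mul hy.le, hγβ, Real.rpow_one] at h1
  · intro h
    have h1 := Real.rpow_lt_rpow (Real.rpow_nonneg hx.le β) h hγ
    rwa [← Real.rpow_mul hx.le, mul_comm β γ, hγβ, Real.rpow_one] at h1

/-- Two-token Gumbel watermark score: for `V = {a, b}` with logits `u a = Δ > 0`,
`u b = 0` and `ŵ = argmax_w (u w / T − log log (1/r_w))` for i.i.d. uniform `r`,
`E[−log(1 − r_ŵ)] = H(1 + e^{−Δ/T})/(1 + e^{−Δ/T}) + H(1 + e^{Δ/T})/(1 + e^{Δ/T})`. -/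
theorem gumbel_two_token_watermark_score {V : Type*} [Fintype V] [DecidableEq V] [Nonempty V]
    (a b : V) (hab : a ≠ b) (huniv : (Finset.univ : Finset V) = {a, b})
    (Δ T : ℝ) (hΔ : 0 < Δ) (hT : 0 < T)
    (u : V → ℝ) (hua : u a = Δ) (hub : u b = 0) :
    ∫ r : V → ℝ,
        -Real.log (1 - r (argmaxOn fun w => u w / T - Real.log (Real.log (1 / r w))))
      ∂(unifPi V)
      = genHarmonic (1 + Real.exp (-Δ / T)) / (1 + Real.exp (-Δ / T))
        + genHarmonic (1 + Real.exp (Δ / T)) / (1 + Real.exp (Δ / T)) := by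
  haveI : IsProbabilityMeasure μ01 := isProb_μ01
  set c : ℝ := Δ / T with hcdef
  set β : ℝ := Real.exp (-c) with hβdef
  set γ : ℝ := Real.exp c with hγdef
  have hβ : 0 < β := Real.exp_pos _
  have hγ : 0 < γ := Real.exp_pos _
  have hγβ : γ * β = 1 := by rw [hβdef, hγdef, ← Real.exp_add]; simp
  -- the measurable equivalence
  have hw : ∀ w : V, w = a ∨ w = b := fun w => by
    have h := Finset.mem_univ w
    rw [huniv] at h
    simpa using h
  let e : Fin 2 ≃ V :=
    { toFun := ![a, b]
      invFun := fun w => if w = a then 0 else 1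
      left_inv := by
        intro i
        fin_cases i
        · simp
        · simp [Ne.symm hab]
      right_inv := by
        intro w
        rcases hw w with h | h <;> subst h <;> simp [Ne.symm hab] }
  let Φ : (Fin 2 → ℝ) ≃ᵐ (V → ℝ) := MeasurableEquiv.piCongrLeft (fun _ => ℝ) e
  let Ψ : (ℝ × ℝ) ≃ᵐ (V → ℝ) := MeasurableEquiv.finTwoArrow.symm.trans Φ
  have hΨmp : MeasurePreserving Ψ (μ01.prod μ01) (unifPi V) := by
    have h1 : MeasurePreserving (MeasurableEquiv.finTwoArrow.symm : (ℝ × ℝ) ≃ᵐ (Fin 2 → ℝ))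
        (μ01.prod μ01) (Measure.pi fun _ => μ01) :=
      (measurePreserving_finTwoArrow μ01).symm _
    have h2 : MeasurePreserving Φ (Measure.pi fun _ : Fin 2 => μ01) (unifPi V) :=
      measurePreserving_piCongrLeft (fun _ : V => μ01) e
    exact h2.comp h1
  have hg0 : ∀ p : ℝ × ℝ, (MeasurableEquiv.finTwoArrow.symm p : Fin 2 → ℝ) 0 = p.1 ∧
      (MeasurableEquiv.finTwoArrow.symm p : Fin 2 → ℝ) 1 = p.2 := by
    intro p
    have h := MeasurableEquiv.apply_symm_apply
      (MeasurableEquiv.finTwoArrow : (Fin 2 → ℝ) ≃ᵐ ℝ × ℝ) p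
    rw [show (MeasurableEquiv.finTwoArrow (MeasurableEquiv.finTwoArrow.symm p : Fin 2 → ℝ))
        = ((MeasurableEquiv.finTwoArrow.symm p : Fin 2 → ℝ) 0,
           (MeasurableEquiv.finTwoArrow.symm p : Fin 2 → ℝ) 1) from rfl] at h
    exact ⟨congrArg Prod.fst h, congrArg Prod.snd h⟩
  have hΨa : ∀ p : ℝ × ℝ, Ψ p a = p.1 := by
    intro p
    show Φ (MeasurableEquiv.finTwoArrow.symm p) a = p.1
    have ha : e 0 = a := rfl
    rw [← ha]
    show (MeasurableEquiv.piCongrLeft (fun _ => ℝ) e) (MeasurableEquiv.finTwoArrow.symm p) (e 0)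
      = p.1
    rw [MeasurableEquiv.coe_piCongrLeft, Equiv.piCongrLeft_apply_apply]
    exact (hg0 p).1
  have hΨb : ∀ p : ℝ × ℝ, Ψ p b = p.2 := by
    intro p
    show Φ (MeasurableEquiv.finTwoArrow.symm p) b = p.2
    have hb : e 1 = b := rfl
    rw [← hb]
    show (MeasurableEquiv.piCongrLeft (fun _ => ℝ) e) (MeasurableEquiv.finTwoArrow.symm p) (e 1)
      = p.2
    rw [MeasurableEquiv.coe_piCongrLeft, Equiv.piCongrLeft_apply_apply]
    exact (hg0 p).2
  -- transport the integral
  rw [← hΨmp.integral_comp Ψ.measurableEmbedding]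
  -- the explicit piecewise function
  set g : ℝ × ℝ → ℝ :=
    fun p => if p.2 < p.1 ^ β then -Real.log (1 - p.1) else -Real.log (1 - p.2) with hgdef
  have measβ : Measurable fun x : ℝ => x ^ β := (Real.continuous_rpow_const hβ.le).measurable
  have hsetlt : MeasurableSet {p : ℝ × ℝ | p.2 < p.1 ^ β} :=
    measurableSet_lt measurable_snd (measβ.comp measurable_fst)
  have hgmeas : Measurable g := by
    apply Measurable.ite hsetlt
    · exact (Real.measurable_log.comp (measurable_const.sub measurable_fst)).neg
    · exact (Real.measurable_log.comp (measurable_const.sub measurable_snd)).neg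
  -- a.e. membership and tie set
  have hmem : ∀ᵐ p ∂(μ01.prod μ01), p ∈ Set.Ioo (0:ℝ) 1 ×ˢ Set.Ioo (0:ℝ) 1 := by
    rw [Measure.prod_restrict]
    exact ae_restrict_mem (measurableSet_Ioo.prod measurableSet_Ioo)
  have htie : (μ01.prod μ01) {p : ℝ × ℝ | p.2 = p.1 ^ β} = 0 := by
    have hs : MeasurableSet {p : ℝ × ℝ | p.2 = p.1 ^ β} :=
      measurableSet_eq_fun measurable_snd (measβ.comp measurable_fst)
    rw [Measure.prod_apply hs]
    have h0 : ∀ x : ℝ, (μ01 (Prod.mk x ⁻¹' {p : ℝ × ℝ | p.2 = p.1 ^ β})) = 0 := by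
      intro x
      have hpre : (Prod.mk x ⁻¹' {p : ℝ × ℝ | p.2 = p.1 ^ β}) = {x ^ β} := by
        ext y; simp [Set.mem_preimage]
      rw [hpre]
      refine le_antisymm (le_trans (Measure.restrict_apply_le _ _) ?_) zero_le
      simp
    simp only [h0, lintegral_zero]
  have htie' : ∀ᵐ p ∂(μ01.prod μ01), p.2 ≠ p.1 ^ β := by
    rw [ae_iff]
    convert htie using 2
    ext p
    simp
  -- identify the integrand with g almost everywhere
  have hae : ∀ᵐ p ∂(μ01.prod μ01),
      -Real.log (1 - Ψ p (argmaxOn fun w => u w / T - Real.log (Real.log (1 / Ψ p w)))) = g p := by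
    filter_upwards [hmem, htie'] with p hp hpt
    have hx : p.1 ∈ Set.Ioo (0:ℝ) 1 := hp.1
    have hy : p.2 ∈ Set.Ioo (0:ℝ) 1 := hp.2
    set f : V → ℝ := fun w => u w / T - Real.log (Real.log (1 / Ψ p w)) with hfdef
    have hfa : f a = c - Real.log (Real.log (1 / p.1)) := by
      rw [hfdef]; simp only [hua, hΨa p, hcdef]
    have hfb : f b = -Real.log (Real.log (1 / p.2)) := by
      rw [hfdef]; simp only [hub, hΨb p, zero_div, zero_sub]
    rcases lt_trichotomy p.2 (p.1 ^ β) with h | h | h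
    · have hlt : f b < f a := by
        rw [hfa, hfb]
        exact (cond_iff hx hy).2 h
      rw [argmaxOn_eq_left huniv hlt, hΨa p, hgdef]
      simp [h]
    · exact absurd h hpt
    · have h1 : p.1 < p.2 ^ γ := (rpow_lt_iff hx.1 hy.1 hβ hγ hγβ).2 h
      have h2 : p.1 < p.2 ^ Real.exp (-(-c)) := by rwa [neg_neg]
      have h3 := (cond_iff hy hx).1 ((cond_iff hy hx).2 h2)
      have hlt : f a < f b := by
        rw [hfa, hfb]
        have := (cond_iff (c := -c) hy hx).2 h2
        linarith
      rw [argmaxOn_eq_right huniv hlt, hΨb p, hgdef]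
      simp [not_lt.2 h.le]
  rw [integral_congr_ae hae]
  -- nonnegativity
  have hg_nn : 0 ≤ᵐ[μ01.prod μ01] g := by
    filter_upwards [hmem] with p hp
    have h1 : Real.log (1 - p.1) ≤ 0 := Real.log_nonpos (by linarith [hp.1.2]) (by linarith [hp.1.1])
    have h2 : Real.log (1 - p.2) ≤ 0 := Real.log_nonpos (by linarith [hp.2.2]) (by linarith [hp.2.1])
    rw [hgdef]
    simp only [Pi.zero_apply]
    by_cases h : p.2 < p.1 ^ β <;> simp [h] <;> linarith
  rw [integral_eq_lintegral_of_nonneg_ae hg_nn hgmeas.aestronglyMeasurable]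
  -- split the lintegral
  set G1 : ℝ × ℝ → ℝ≥0∞ :=
    fun p => if p.2 < p.1 ^ β then ENNReal.ofReal (-Real.log (1 - p.1)) else 0 with hG1def
  set G2 : ℝ × ℝ → ℝ≥0∞ :=
    fun p => if p.1 ^ β < p.2 then ENNReal.ofReal (-Real.log (1 - p.2)) else 0 with hG2def
  have hG1meas : Measurable G1 := by
    apply Measurable.ite hsetlt _ measurable_const
    exact ENNReal.measurable_ofReal.comp
      ((Real.measurable_log.comp (measurable_const.sub measurable_fst)).neg)
  have hG2meas : Measurable G2 := by
    apply Measurable.ite (measurableSet_lt (measβ.comp measurable_fst) measurable_snd)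
      _ measurable_const
    exact ENNReal.measurable_ofReal.comp
      ((Real.measurable_log.comp (measurable_const.sub measurable_snd)).neg)
  have hsplit : ∫⁻ p, ENNReal.ofReal (g p) ∂(μ01.prod μ01)
      = (∫⁻ p, G1 p ∂(μ01.prod μ01)) + ∫⁻ p, G2 p ∂(μ01.prod μ01) := by
    rw [← lintegral_add_left hG1meas]
    apply lintegral_congr_ae
    filter_upwards [htie'] with p hpt
    rcases lt_trichotomy p.2 (p.1 ^ β) with h | h | h
    · rw [hgdef, hG1def, hG2def]
      simp [h, lt_asymm h]
    · exact absurd h hpt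
    · rw [hgdef, hG1def, hG2def]
      simp [h, lt_asymm h]
  rw [hsplit]
  -- evaluate the two pieces
  have hG1 : ∫⁻ p, G1 p ∂(μ01.prod μ01) = ENNReal.ofReal (genHarmonic (β + 1) / (β + 1)) := by
    rw [lintegral_prod _ hG1meas.aemeasurable]
    have hinner : ∀ᵐ x ∂μ01, (∫⁻ y, G1 (x, y) ∂μ01)
        = ENNReal.ofReal (x ^ β * (-Real.log (1 - x))) := by
      filter_upwards [ae_restrict_mem measurableSet_Ioo] with x hx
      have hxb1 : x ^ β ≤ 1 := (Real.rpow_le_one hx.1.le hx.2.le hβ.le)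
      have hseteq : Set.Iio (x ^ β) ∩ Set.Ioo (0:ℝ) 1 = Set.Ioo 0 (x ^ β) := by
        ext y
        simp only [Set.mem_inter_iff, Set.mem_Iio, Set.mem_Ioo]
        constructor
        · rintro ⟨h1, h2, _⟩; exact ⟨h2, h1⟩
        · rintro ⟨h1, h2⟩; exact ⟨h2, h1, lt_of_lt_of_le h2 hxb1⟩
      calc ∫⁻ y, G1 (x, y) ∂μ01
          = ∫⁻ y, (Set.Iio (x ^ β)).indicator
              (fun _ => ENNReal.ofReal (-Real.log (1 - x))) y ∂μ01 := by
            apply lintegral_congr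
            intro y
            by_cases h : y < x ^ β <;> simp [hG1def, Set.indicator, h]
        _ = ∫⁻ _ in Set.Iio (x ^ β), ENNReal.ofReal (-Real.log (1 - x)) ∂μ01 := by
            rw [lintegral_indicator measurableSet_Iio]
        _ = ENNReal.ofReal (-Real.log (1 - x)) * μ01 (Set.Iio (x ^ β)) := by
            rw [setLIntegral_const]
        _ = ENNReal.ofReal (-Real.log (1 - x)) * ENNReal.ofReal (x ^ β) := by
            rw [Measure.restrict_apply measurableSet_Iio, hseteq, Real.volume_Ioo, sub_zero]
        _ = ENNReal.ofReal (x ^ β * (-Real.log (1 - x))) := by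
            rw [← ENNReal.ofReal_mul (by
              have : Real.log (1 - x) ≤ 0 :=
                Real.log_nonpos (by linarith [hx.2]) (by linarith [hx.1])
              linarith), mul_comm]
    rw [lintegral_congr_ae hinner]
    exact keyI hβ
  have hG2 : ∫⁻ p, G2 p ∂(μ01.prod μ01) = ENNReal.ofReal (genHarmonic (γ + 1) / (γ + 1)) := by
    rw [lintegral_prod_symm _ hG2meas.aemeasurable]
    have hinner : ∀ᵐ y ∂μ01, (∫⁻ x, G2 (x, y) ∂μ01)
        = ENNReal.ofReal (y ^ γ * (-Real.log (1 - y))) := by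
      filter_upwards [ae_restrict_mem measurableSet_Ioo] with y hy
      have hyg1 : y ^ γ ≤ 1 := (Real.rpow_le_one hy.1.le hy.2.le hγ.le)
      have hseteq : {x : ℝ | x ^ β < y} ∩ Set.Ioo (0:ℝ) 1 = Set.Ioo 0 (y ^ γ) := by
        ext x
        simp only [Set.mem_inter_iff, Set.mem_setOf_eq, Set.mem_Ioo]
        constructor
        · rintro ⟨h1, h2, h3⟩
          exact ⟨h2, (rpow_lt_iff h2 hy.1 hβ hγ hγβ).2 h1⟩
        · rintro ⟨h1, h2⟩
          exact ⟨(rpow_lt_iff h1 hy.1 hβ hγ hγβ).1 h2, h1, lt_of_lt_of_le h2 hyg1⟩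
      have hsmeas : MeasurableSet {x : ℝ | x ^ β < y} :=
        measurableSet_lt measβ measurable_const
      calc ∫⁻ x, G2 (x, y) ∂μ01
          = ∫⁻ x, ({x : ℝ | x ^ β < y}).indicator
              (fun _ => ENNReal.ofReal (-Real.log (1 - y))) x ∂μ01 := by
            apply lintegral_congr
            intro x
            by_cases h : x ^ β < y <;> simp [hG2def, Set.indicator, h]
        _ = ∫⁻ _ in {x : ℝ | x ^ β < y}, ENNReal.ofReal (-Real.log (1 - y)) ∂μ01 := by
            rw [lintegral_indicator hsmeas]
        _ = ENNReal.ofReal (-Real.log (1 - y)) * μ01 {x : ℝ | x ^ β < y} := by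
            rw [setLIntegral_const]
        _ = ENNReal.ofReal (-Real.log (1 - y)) * ENNReal.ofReal (y ^ γ) := by
            rw [Measure.restrict_apply hsmeas, hseteq, Real.volume_Ioo, sub_zero]
        _ = ENNReal.ofReal (y ^ γ * (-Real.log (1 - y))) := by
            rw [← ENNReal.ofReal_mul (by
              have : Real.log (1 - y) ≤ 0 :=
                Real.log_nonpos (by linarith [hy.2]) (by linarith [hy.1])
              linarith), mul_comm]
    rw [lintegral_congr_ae hinner]
    exact keyI hγ
  rw [hG1, hG2]
  -- final arithmetic
  have hR1 : 0 ≤ genHarmonic (β + 1) / (β + 1) :=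
    div_nonneg (harmonic_nonneg (by linarith)) (by linarith)
  have hR2 : 0 ≤ genHarmonic (γ + 1) / (γ + 1) :=
    div_nonneg (harmonic_nonneg (by linarith)) (by linarith)
  rw [ENNReal.toReal_add ENNReal.ofReal_ne_top ENNReal.ofReal_ne_top,
    ENNReal.toReal_ofReal hR1, ENNReal.toReal_ofReal hR2]
  have hβeq : β + 1 = 1 + Real.exp (-Δ / T) := by
    rw [hβdef, hcdef, neg_div, add_comm]
  have hγeq : γ + 1 = 1 + Real.exp (Δ / T) := by
    rw [hγdef, hcdef, add_comm]
  rw [hβeq, hγeq]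
end

section
/- Integral lemma for harmonic numbers: for every real a > 0 and every integer N ≥ 1, ∫₀^{1/a} ( −log x ) · (1 − a x)^{N−1} dx = ( log a + H_N ) / (a N), where H_N = 1 + 1/2 + ⋯ + 1/N. In particular, taking a = 1, ∫₀¹ ( −log x ) · (1 − x)^{N−1} dx = H_N / N. -/
open Finset MeasureTheory

lemma alt_choose_sum (N : ℕ) :
    ∑ k ∈ Finset.range N, (-1:ℝ)^(k+1) * (N.choose (k+1)) / (k+1) = -harmonicR N := by
  induction N with
  | zero => simp [harmonicR]
  | succ n ih =>
    have pascal : ∀ k, ((n+1).choose (k+1) : ℝ) = (n.choose (k+1) : ℝ) + (n.choose k : ℝ) := by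
      intro k
      rw [Nat.choose_succ_succ']
      push_cast
      ring
    have h1 : ∑ k ∈ Finset.range (n+1), (-1:ℝ)^(k+1) * ((n+1).choose (k+1)) / (k+1)
        = (∑ k ∈ Finset.range (n+1), (-1:ℝ)^(k+1) * (n.choose (k+1)) / (k+1))
          + ∑ k ∈ Finset.range (n+1), (-1:ℝ)^(k+1) * (n.choose k) / (k+1) := by
      rw [← Finset.sum_add_distrib]
      refine Finset.sum_congr rfl fun k _ => ?_
      rw [pascal k]; ring
    have h2 : ∑ k ∈ Finset.range (n+1), (-1:ℝ)^(k+1) * (n.choose (k+1)) / (k+1)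
        = ∑ k ∈ Finset.range n, (-1:ℝ)^(k+1) * (n.choose (k+1)) / (k+1) := by
      rw [Finset.sum_range_succ, Nat.choose_succ_self]
      simp
    -- second sum: C(n,k)/(k+1) = C(n+1,k+1)/(n+1)
    have hck : ∀ k, (n.choose k : ℝ) / (k+1) = ((n+1).choose (k+1) : ℝ) / (n+1) := by
      intro k
      have := Nat.add_one_mul_choose_eq n k
      have h' : ((n+1) * n.choose k : ℝ) = ((n+1).choose (k+1) * (k+1) : ℝ) := by
        exact_mod_cast congrArg (Nat.cast : ℕ → ℝ) this
      have hk1 : ((k:ℝ)+1) ≠ 0 := by positivity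
      have hn1 : ((n:ℝ)+1) ≠ 0 := by positivity
      field_simp
      linarith [h']
    have h3 : ∑ k ∈ Finset.range (n+1), (-1:ℝ)^(k+1) * (n.choose k) / (k+1)
        = (∑ k ∈ Finset.range (n+1), (-1:ℝ)^(k+1) * ((n+1).choose (k+1))) / (n+1) := by
      rw [Finset.sum_div]
      refine Finset.sum_congr rfl fun k _ => ?_
      rw [mul_div_assoc, hck k]; ring
    have h4 : ∑ k ∈ Finset.range (n+1), (-1:ℝ)^(k+1) * ((n+1).choose (k+1)) = -1 := by
      have := Int.alternating_sum_range_choose_of_ne (n := n+1) (by omega)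
      have h5 : (∑ i ∈ Finset.range (n+2), (-1:ℝ)^i * ((n+1).choose i)) = 0 := by
        exact_mod_cast congrArg (Int.cast : ℤ → ℝ) this
      rw [Finset.sum_range_succ'] at h5
      simp only [pow_zero, one_mul, Nat.choose_zero_right, Nat.cast_one] at h5
      linarith [h5]
    rw [h1, h2, ih, h3, h4]
    simp only [harmonicR, Finset.sum_range_succ]
    ring

lemma log_intervalIntegrable {b : ℝ} (hb : 0 < b) :
    IntervalIntegrable Real.log volume 0 b := by
  have hg : IntervalIntegrable (fun x : ℝ => x + 2 * x ^ (-(1/2) : ℝ)) volume 0 b := by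
    refine (continuous_id.intervalIntegrable 0 b).add ?_
    exact (intervalIntegral.intervalIntegrable_rpow' (by norm_num)).const_mul 2
  refine hg.mono_fun Real.measurable_log.aestronglyMeasurable ?_
  rw [Set.uIoc_of_le hb.le]
  filter_upwards [MeasureTheory.ae_restrict_mem measurableSet_Ioc] with x hx
  obtain ⟨hx0, hxb⟩ := hx
  have hrp : x ^ (-(1/2) : ℝ) = (Real.sqrt x)⁻¹ := by
    rw [Real.rpow_neg hx0.le, Real.sqrt_eq_rpow]
  have hs : 0 < Real.sqrt x := Real.sqrt_pos.2 hx0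
  have hup : Real.log x ≤ x := Real.log_le_self hx0.le
  have hlow : -Real.log x ≤ 2 * x ^ (-(1/2) : ℝ) := by
    have h1 : Real.log x = 2 * Real.log (Real.sqrt x) := by
      rw [Real.log_sqrt hx0.le]; ring
    have h2 : -Real.log (Real.sqrt x) = Real.log (Real.sqrt x)⁻¹ := (Real.log_inv _).symm
    have h3 : Real.log (Real.sqrt x)⁻¹ ≤ (Real.sqrt x)⁻¹ - 1 :=
      Real.log_le_sub_one_of_pos (by positivity)
    rw [hrp, h1]
    nlinarith [h2, h3]
  have hrpos : (0:ℝ) ≤ x ^ (-(1/2) : ℝ) := by rw [hrp]; positivity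
  simp only [Real.norm_eq_abs]
  rw [abs_le]
  constructor
  · rw [abs_of_nonneg (by positivity)]
    nlinarith
  · rw [abs_of_nonneg (by positivity)]
    nlinarith

lemma key (a : ℝ) (ha : 0 < a) (N : ℕ) (hN : 1 ≤ N) :
    ∫ x in (0:ℝ)..(1 / a), (-Real.log x) * (1 - a * x) ^ (N - 1)
      = (Real.log a + harmonicR N) / (a * N) := by
  set b : ℝ := 1 / a with hbdef
  have hb : 0 < b := by positivity
  have haN : (a * N : ℝ) ≠ 0 := by
    have : (N:ℝ) ≠ 0 := by exact_mod_cast (by omega : N ≠ 0)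
    positivity
  set c : ℕ → ℝ := fun k => ((N.choose (k+1)) : ℝ) * (-a)^(k+1) with hc
  -- binomial identity
  have hbin : ∀ x : ℝ, ∑ k ∈ Finset.range N, c k * x^(k+1) = (1 - a*x)^N - 1 := by
    intro x
    have h1 : (1 - a*x)^N = ∑ k ∈ Finset.range (N+1), (-(a*x))^k * (N.choose k) := by
      rw [show (1 - a*x) = (-(a*x) + 1) by ring, add_pow]
      simp
    rw [h1, Finset.sum_range_succ']
    simp only [pow_zero, one_mul, Nat.choose_zero_right, Nat.cast_one]
    rw [add_sub_cancel_right]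
    refine Finset.sum_congr rfl fun k _ => ?_
    simp only [hc]
    rw [show (-(a*x)) = (-a)*x by ring, mul_pow]
    ring
  have hbin' : ∀ x : ℝ, x * ∑ k ∈ Finset.range N, c k * x^k = (1 - a*x)^N - 1 := by
    intro x
    rw [← hbin x, Finset.mul_sum]
    refine Finset.sum_congr rfl fun k _ => ?_
    rw [pow_succ]
    ring
  set F : ℝ → ℝ := fun x =>
    Real.log x * ((1 - a*x)^N - 1) / (a*N)
      - (∑ k ∈ Finset.range N, c k * x^(k+1)/(k+1)) / (a*N) with hF
  -- continuity
  have hFalt : F = fun x =>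
      (x * Real.log x) * (∑ k ∈ Finset.range N, c k * x^k) / (a*N)
        - (∑ k ∈ Finset.range N, c k * x^(k+1)/(k+1)) / (a*N) := by
    funext x
    rw [hF]
    have : (x * Real.log x) * (∑ k ∈ Finset.range N, c k * x^k)
        = Real.log x * ((1 - a*x)^N - 1) := by
      rw [← hbin' x]; ring
    rw [this]
  have hcont : ContinuousOn F (Set.Icc 0 b) := by
    rw [hFalt]
    apply Continuous.continuousOn
    apply Continuous.sub
    · apply Continuous.div_const
      apply Continuous.mul Real.continuous_mul_log
      exact continuous_finset_sum _ fun i _ => continuous_const.mul (continuous_pow i)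
    · apply Continuous.div_const
      exact continuous_finset_sum _ fun i _ =>
        (continuous_const.mul (continuous_pow (i+1))).div_const _
  -- derivative
  have hderiv : ∀ x ∈ Set.Ioo (0:ℝ) b,
      HasDerivAt F ((-Real.log x) * (1 - a*x)^(N-1)) x := by
    intro x hx
    have hx0 : (0:ℝ) < x := hx.1
    have hlog : HasDerivAt Real.log x⁻¹ x := Real.hasDerivAt_log hx0.ne'
    have hin : HasDerivAt (fun x : ℝ => 1 - a*x) (-a) x := by
      simpa using ((hasDerivAt_id x).const_mul a).const_sub 1
    have hpow : HasDerivAt (fun x : ℝ => (1 - a*x)^N - 1)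
        ((N:ℝ) * (1 - a*x)^(N-1) * (-a)) x := (hin.pow N).sub_const 1
    have hQ : HasDerivAt (fun x : ℝ => ∑ k ∈ Finset.range N, c k * x^(k+1)/(k+1))
        (∑ k ∈ Finset.range N, c k * x^k) x := by
      have : HasDerivAt (fun x : ℝ => ∑ k ∈ Finset.range N, c k * x^(k+1)/(k+1))
          (∑ k ∈ Finset.range N, c k * (((k:ℝ)+1) * x^k) / ((k:ℝ)+1)) x := by
        apply HasDerivAt.fun_sum
        intro k _
        have h := (hasDerivAt_pow (k+1) x).const_mul (c k)
        have h2 := h.div_const ((k:ℝ)+1)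
        simpa using h2
      convert this using 1
      refine Finset.sum_congr rfl fun k _ => ?_
      have hk : ((k:ℝ)+1) ≠ 0 := by positivity
      field_simp
    have hD := ((hlog.mul hpow).div_const (a*N)).sub (hQ.div_const (a*N))
    refine hD.congr_deriv ?_
    have hs := hbin' x
    set s := ∑ k ∈ Finset.range N, c k * x^k
    have hxinv : x⁻¹ * ((1 - a*x)^N - 1) = s := by
      rw [← hs]
      field_simp
    rw [hxinv]
    have hNsplit : (N:ℝ) * (1 - a*x)^(N-1) * (-a) / (a*N) = -(1 - a*x)^(N-1) := by
      field_simp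
    field_simp
    ring
  -- integrability
  have hint : IntervalIntegrable (fun x => (-Real.log x) * (1 - a*x)^(N-1)) volume 0 b := by
    apply IntervalIntegrable.mul_continuousOn
    · exact (log_intervalIntegrable hb).neg
    · exact (Continuous.continuousOn (by continuity))
  have hFTC := intervalIntegral.integral_eq_sub_of_hasDeriv_right_of_le hb.le hcont
    (fun x hx => (hderiv x hx).hasDerivWithinAt) hint
  rw [hFTC]
  -- endpoint values
  have hF0 : F 0 = 0 := by
    simp only [hF]
    simp [Real.log_zero]
  have hab1 : a * b = 1 := by
    rw [hbdef]; field_simp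
  have hFb : F b = (Real.log a + harmonicR N) / (a*N) := by
    simp only [hF]
    have h1 : (1 - a*b)^N = 0 := by
      rw [hab1, sub_self, zero_pow (by omega)]
    have h2 : Real.log b = -Real.log a := by
      rw [hbdef, one_div, Real.log_inv]
    have h3 : ∑ k ∈ Finset.range N, c k * b^(k+1)/(k+1) = -harmonicR N := by
      rw [← alt_choose_sum N]
      refine Finset.sum_congr rfl fun k _ => ?_
      have hone : (-a)^(k+1) * b^(k+1) = (-1:ℝ)^(k+1) := by
        rw [← mul_pow]
        congr 1
        rw [hbdef]; field_simp
      simp only [hc]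
      rw [mul_assoc, hone]
      ring
    rw [h1, h2, h3]
    field_simp
    ring
  rw [hF0, hFb, sub_zero]

/-- Integral lemma for harmonic numbers: for `a > 0` and `N ≥ 1`,
`∫₀^{1/a} (−log x)·(1 − a x)^{N−1} dx = (log a + H_N)/(a N)`; in particular
`∫₀¹ (−log x)·(1 − x)^{N−1} dx = H_N / N`. -/
theorem integral_neg_log_mul_pow (a : ℝ) (ha : 0 < a) (N : ℕ) (hN : 1 ≤ N) :
    (∫ x in (0:ℝ)..(1 / a), (-Real.log x) * (1 - a * x) ^ (N - 1)
        = (Real.log a + harmonicR N) / (a * N)) ∧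
    (∫ x in (0:ℝ)..1, (-Real.log x) * (1 - x) ^ (N - 1) = harmonicR N / N) := by
  constructor
  · exact key a ha N hN
  · have h := key 1 one_pos N hN
    simpa using h
end

section
/- Entropy lower bound for the Gumbel watermark score (Aaronson): with H(z) = ∫₀¹ (1 − x^z)/(1 − x) dx, one has H(x) ≥ 1 + (π²/6 − 1)·log x for every real x ≥ 1. Consequently, for any finite probability vector (P(w))_{w∈V} with P(w) > 0 for all w and Σ_w P(w) = 1, Σ_{w∈V} P(w) · H( 1/P(w) ) ≥ 1 + (π²/6 − 1) · Σ_{w∈V} P(w) · log( 1/P(w) ), i.e., the expected Gumbel test score exceeds 1 plus (π²/6 − 1) times the Shannon entropy of P. -/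
open Finset MeasureTheory

section GumbelAux

open Real MeasureTheory Set intervalIntegral


lemma bern2 (u t : ℝ) (hu0 : 0 < u) (ht : 1 ≤ t) :
    t * (u ^ (t - 1) * (1 - u)) ≤ 1 - u ^ t := by
  have h := one_add_mul_self_le_rpow_one_add (s := 1/u - 1) (by
    have : 0 < 1/u := by positivity
    linarith) ht
  have h2 : (1 : ℝ) + (1/u - 1) = 1/u := by ring
  rw [h2, one_div, ← Real.rpow_neg_one u, ← Real.rpow_mul hu0.le] at h
  have hx : (0:ℝ) < u ^ t := Real.rpow_pos_of_pos hu0 t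
  have hyx : u ^ (t-1) * u = u ^ t := by
    rw [← Real.rpow_add_one hu0.ne' (t-1)]; ring_nf
  have hinv : u ^ (-1 * t) = (u ^ t)⁻¹ := by
    rw [neg_one_mul, Real.rpow_neg hu0.le]
  have hne : u ^ ((-1:ℝ)) = u⁻¹ := Real.rpow_neg_one u
  rw [hinv, hne] at h
  have hxx : u ^ t * (u ^ t)⁻¹ = 1 := mul_inv_cancel₀ hx.ne'
  have h5 : u ^ t * u⁻¹ = u ^ (t-1) := by
    rw [← hyx, mul_assoc, mul_inv_cancel₀ hu0.ne', mul_one]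
  nlinarith [mul_le_mul_of_nonneg_left h hx.le]

lemma bern1 (u t : ℝ) (hu0 : 0 ≤ u) (ht : 1 ≤ t) : 1 - u ^ t ≤ t * (1 - u) := by
  have h := one_add_mul_self_le_rpow_one_add (s := u - 1) (by linarith) ht
  have h2 : (1 : ℝ) + (u - 1) = u := by ring
  rw [h2] at h; linarith

/-- `∫₀¹ u^(a-1) (-log u) du = 1/a²` for `a > 1`. -/
lemma int_rpow_neg_log (a : ℝ) (ha : 1 < a) :
    ∫ u in Ioo (0:ℝ) 1, u ^ (a - 1) * (-Real.log u) = 1 / a ^ 2 := by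
  have ha0 : (0:ℝ) < a := by linarith
  have ha1 : (0:ℝ) < a - 1 := by linarith
  -- antiderivative G u = (u^a - u^a * log (u^a)) / a^2
  set G : ℝ → ℝ := fun u => (u ^ a - u ^ a * Real.log (u ^ a)) / a ^ 2 with hG
  have hcontG : Continuous G := by
    have h1 : Continuous fun u : ℝ => u ^ a := Real.continuous_rpow_const ha0.le
    have h2 : Continuous fun v : ℝ => v - v * Real.log v :=
      continuous_id.sub Real.continuous_mul_log
    exact (h2.comp h1).div_const _
  have hderiv : ∀ u ∈ Ioo (0:ℝ) 1,
      HasDerivWithinAt G (u ^ (a - 1) * (-Real.log u)) (Ioi u) u := by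
    intro u hu
    have hu0 : (0:ℝ) < u := hu.1
    have h1 : HasDerivAt (fun u : ℝ => u ^ a) (a * u ^ (a - 1)) u :=
      Real.hasDerivAt_rpow_const (Or.inl hu0.ne')
    have hlog : HasDerivAt Real.log u⁻¹ u := Real.hasDerivAt_log hu0.ne'
    have h2 : HasDerivAt (fun u : ℝ => u ^ a * Real.log u)
        (a * u ^ (a - 1) * Real.log u + u ^ a * u⁻¹) u := h1.mul hlog
    have h3 : HasDerivAt (fun u : ℝ => (u ^ a - a * (u ^ a * Real.log u)) / a ^ 2)
        ((a * u ^ (a - 1) - a * (a * u ^ (a - 1) * Real.log u + u ^ a * u⁻¹)) / a ^ 2) u :=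
      (h1.sub ((h2.const_mul a))).div_const _
    have hxa : u ^ a * u⁻¹ = u ^ (a - 1) := by
      rw [Real.rpow_sub hu0, Real.rpow_one, div_eq_mul_inv]
    have heq : (a * u ^ (a - 1) - a * (a * u ^ (a - 1) * Real.log u + u ^ a * u⁻¹)) / a ^ 2
        = u ^ (a - 1) * (-Real.log u) := by
      rw [hxa]; field_simp; ring
    rw [heq] at h3
    have hGeq : G =ᶠ[nhds u] fun u : ℝ => (u ^ a - a * (u ^ a * Real.log u)) / a ^ 2 := by
      filter_upwards [IsOpen.mem_nhds isOpen_Ioi (show u ∈ Ioi (0:ℝ) from hu0)] with v hv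
      have : Real.log (v ^ a) = a * Real.log v := Real.log_rpow hv a
      simp only [hG, this]; ring
    exact (h3.congr_of_eventuallyEq hGeq).hasDerivWithinAt
  have hint : IntervalIntegrable (fun u : ℝ => u ^ (a-1) * (-Real.log u)) volume 0 1 := by
    apply ContinuousOn.intervalIntegrable
    rw [uIcc_of_le (by norm_num : (0:ℝ) ≤ 1)]
    have hc : ContinuousOn (fun u : ℝ => -(a-1)⁻¹ * ((u ^ (a-1)) * Real.log (u ^ (a-1))))
        (Icc 0 1) :=
      (continuous_const.mul
        (Real.continuous_mul_log.comp (Real.continuous_rpow_const ha1.le))).continuousOn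
    apply hc.congr
    intro u hu
    dsimp only
    rcases eq_or_lt_of_le hu.1 with h | h
    · simp [← h, Real.zero_rpow ha1.ne']
    · rw [Real.log_rpow h]; field_simp
  have key := integral_eq_sub_of_hasDeriv_right_of_le (by norm_num : (0:ℝ) ≤ 1)
    hcontG.continuousOn hderiv hint
  have hG1 : G 1 = 1 / a ^ 2 := by simp [hG]
  have hG0 : G 0 = 0 := by simp [hG, Real.zero_rpow ha0.ne']
  rw [hG1, hG0, sub_zero] at key
  rw [← key, intervalIntegral.integral_of_le (by norm_num : (0:ℝ) ≤ 1),
    MeasureTheory.integral_Ioc_eq_integral_Ioo]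

lemma contOn_rpow_neg_log (a : ℝ) (ha : 1 < a) :
    ContinuousOn (fun u : ℝ => u ^ (a - 1) * (-Real.log u)) (Icc 0 1) := by
  have ha1 : (0:ℝ) < a - 1 := by linarith
  have hc : ContinuousOn (fun u : ℝ => -(a-1)⁻¹ * ((u ^ (a-1)) * Real.log (u ^ (a-1))))
      (Icc 0 1) :=
    (continuous_const.mul
      (Real.continuous_mul_log.comp (Real.continuous_rpow_const ha1.le))).continuousOn
  apply hc.congr
  intro u hu
  dsimp only
  rcases eq_or_lt_of_le hu.1 with h | h
  · simp [← h, Real.zero_rpow ha1.ne']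
  · rw [Real.log_rpow h]; field_simp

lemma integrableOn_rpow_neg_log (a : ℝ) (ha : 1 < a) :
    IntegrableOn (fun u : ℝ => u ^ (a - 1) * (-Real.log u)) (Ioo 0 1) :=
  ((contOn_rpow_neg_log a ha).integrableOn_compact isCompact_Icc).mono_set Ioo_subset_Icc_self

lemma hasSum_shifted_zeta :
    HasSum (fun k : ℕ => 1 / ((k:ℝ) + 2) ^ 2) (Real.pi ^ 2 / 6 - 1) := by
  have key : HasSum (fun n : ℕ => 1 / (((n + 2 : ℕ)):ℝ) ^ 2) (Real.pi ^ 2 / 6 - 1) :=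
    (hasSum_nat_add_iff (f := fun n : ℕ => 1 / (n:ℝ) ^ 2) 2).mpr (by
      convert hasSum_zeta_two using 1
      · rfl
      norm_num [Finset.sum_range_succ])
  convert key using 2 with k
  push_cast; ring

lemma hasSum_pointwise (t u : ℝ) (ht : 1 ≤ t) (hu : u ∈ Ioo (0:ℝ) 1) :
    HasSum (fun k : ℕ => t * ((-Real.log u) * u ^ (((k:ℝ) + 2) * t - 1)))
      (t * ((-Real.log u) * u ^ (2*t - 1) / (1 - u ^ t))) := by
  have hu0 := hu.1; have hu1 := hu.2
  have ht0 : (0:ℝ) < t := by linarith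
  have hr0 : (0:ℝ) ≤ u ^ t := Real.rpow_nonneg hu0.le t
  have hr1 : u ^ t < 1 := Real.rpow_lt_one hu0.le hu1 ht0
  have hgeo : HasSum (fun k : ℕ => (u ^ t) ^ k) (1 - u ^ t)⁻¹ :=
    hasSum_geometric_of_lt_one hr0 hr1
  have h := hgeo.mul_left (t * ((-Real.log u) * u ^ (2*t - 1)))
  convert h using 1
  · rfl
  · funext k
    have he : ((k:ℝ) + 2) * t - 1 = (2*t - 1) + t * (k:ℝ) := by ring
    rw [he, Real.rpow_add hu0, Real.rpow_mul hu0.le, Real.rpow_natCast]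
    ring
  · rw [div_eq_mul_inv]; ring

lemma Feval (t : ℝ) (ht : 1 ≤ t) :
    ∫ u in Ioo (0:ℝ) 1, t * ((-Real.log u) * u ^ (2*t - 1) / (1 - u ^ t))
      = (Real.pi ^ 2 / 6 - 1) / t := by
  have ht0 : (0:ℝ) < t := by linarith
  set F : ℕ → ℝ → ℝ := fun k u => t * ((-Real.log u) * u ^ (((k:ℝ) + 2) * t - 1)) with hF
  have ha : ∀ k : ℕ, (1:ℝ) < ((k:ℝ) + 2) * t := by
    intro k; nlinarith [Nat.cast_nonneg (α := ℝ) k]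
  have hFeq : ∀ k : ℕ, F k = fun u =>
      t * (u ^ (((k:ℝ) + 2) * t - 1) * (-Real.log u)) := by
    intro k; funext u; simp only [hF]; ring
  have hFint : ∀ k : ℕ, Integrable (F k) (volume.restrict (Ioo (0:ℝ) 1)) := by
    intro k
    rw [hFeq k]
    exact (integrableOn_rpow_neg_log _ (ha k)).const_mul t
  have hval : ∀ k : ℕ, ∫ u in Ioo (0:ℝ) 1, F k u = 1 / ((k:ℝ) + 2) ^ 2 / t := by
    intro k
    rw [hFeq k, MeasureTheory.integral_const_mul,
      int_rpow_neg_log _ (ha k)]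
    have h2 : ((k:ℝ) + 2) * t ≠ 0 := by positivity
    field_simp
  have hnorm : ∀ k : ℕ, (∫ u in Ioo (0:ℝ) 1, ‖F k u‖) = ∫ u in Ioo (0:ℝ) 1, F k u := by
    intro k
    apply setIntegral_congr_fun measurableSet_Ioo
    intro u hu
    apply Real.norm_of_nonneg
    have h1 : 0 ≤ -Real.log u := by
      rw [neg_nonneg]; exact Real.log_nonpos hu.1.le hu.2.le
    have h2 : (0:ℝ) ≤ u ^ (((k:ℝ) + 2) * t - 1) := Real.rpow_nonneg hu.1.le _
    positivity
  have hsum : Summable fun k : ℕ => ∫ u in Ioo (0:ℝ) 1, ‖F k u‖ := by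
    have := (hasSum_shifted_zeta.div_const t).summable
    apply this.congr
    intro k
    rw [hnorm, hval]
  have hswap := MeasureTheory.integral_tsum_of_summable_integral_norm hFint hsum
  calc ∫ u in Ioo (0:ℝ) 1, t * ((-Real.log u) * u ^ (2*t - 1) / (1 - u ^ t))
      = ∫ u in Ioo (0:ℝ) 1, ∑' k : ℕ, F k u := by
        apply setIntegral_congr_fun measurableSet_Ioo
        intro u hu
        exact ((hasSum_pointwise t u ht hu).tsum_eq).symm
    _ = ∑' k : ℕ, ∫ u in Ioo (0:ℝ) 1, F k u := hswap.symm
    _ = ∑' k : ℕ, 1 / ((k:ℝ) + 2) ^ 2 / t := by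
        apply tsum_congr; intro k; exact hval k
    _ = (Real.pi ^ 2 / 6 - 1) / t := (hasSum_shifted_zeta.div_const t).tsum_eq

lemma neg_log_le (u : ℝ) (hu0 : 0 < u) : u * (-Real.log u) ≤ 1 - u := by
  have h := Real.log_le_sub_one_of_pos (show (0:ℝ) < u⁻¹ by positivity)
  rw [Real.log_inv] at h
  have h2 : u * u⁻¹ = 1 := mul_inv_cancel₀ hu0.ne'
  nlinarith [mul_le_mul_of_nonneg_left h hu0.le]

lemma f_nonneg (t u : ℝ) (hu : u ∈ Ioo (0:ℝ) 1) :
    0 ≤ u ^ t * (-Real.log u) / (1 - u) := by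
  have h1 : 0 ≤ -Real.log u := by
    rw [neg_nonneg]; exact Real.log_nonpos hu.1.le hu.2.le
  have h2 : (0:ℝ) ≤ u ^ t := Real.rpow_nonneg hu.1.le t
  have h3 : (0:ℝ) < 1 - u := by linarith [hu.2]
  positivity

lemma f_le_one (t u : ℝ) (ht : 1 ≤ t) (hu : u ∈ Ioo (0:ℝ) 1) :
    u ^ t * (-Real.log u) / (1 - u) ≤ 1 := by
  have h3 : (0:ℝ) < 1 - u := by linarith [hu.2]
  rw [div_le_one h3]
  have hL : 0 ≤ -Real.log u := by
    rw [neg_nonneg]; exact Real.log_nonpos hu.1.le hu.2.le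
  have h1 : u ^ t ≤ u := by
    calc u ^ t ≤ u ^ (1:ℝ) := Real.rpow_le_rpow_of_exponent_ge hu.1 hu.2.le ht
    _ = u := Real.rpow_one u
  calc u ^ t * (-Real.log u) ≤ u * (-Real.log u) := mul_le_mul_of_nonneg_right h1 hL
  _ ≤ 1 - u := neg_log_le u hu.1

lemma g_nonneg (t u : ℝ) (ht : 1 ≤ t) (hu : u ∈ Ioo (0:ℝ) 1) :
    0 ≤ t * ((-Real.log u) * u ^ (2*t - 1) / (1 - u ^ t)) := by
  have h1 : 0 ≤ -Real.log u := by
    rw [neg_nonneg]; exact Real.log_nonpos hu.1.le hu.2.le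
  have h2 : (0:ℝ) ≤ u ^ (2*t-1) := Real.rpow_nonneg hu.1.le _
  have h3 : (0:ℝ) < 1 - u ^ t := by
    have := Real.rpow_lt_one hu.1.le hu.2 (by linarith : (0:ℝ) < t)
    linarith
  have ht0 : (0:ℝ) ≤ t := by linarith
  positivity

lemma g_le_f (t u : ℝ) (ht : 1 ≤ t) (hu : u ∈ Ioo (0:ℝ) 1) :
    t * ((-Real.log u) * u ^ (2*t - 1) / (1 - u ^ t))
      ≤ u ^ t * (-Real.log u) / (1 - u) := by
  have hu0 := hu.1
  have hL : 0 ≤ -Real.log u := by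
    rw [neg_nonneg]; exact Real.log_nonpos hu.1.le hu.2.le
  have h3 : (0:ℝ) < 1 - u := by linarith [hu.2]
  have h4 : (0:ℝ) < 1 - u ^ t := by
    have := Real.rpow_lt_one hu.1.le hu.2 (by linarith : (0:ℝ) < t)
    linarith
  have hxt : (0:ℝ) ≤ u ^ t := Real.rpow_nonneg hu0.le t
  rw [mul_div_assoc' t _ _, div_le_div_iff₀ h4 h3]
  have key := bern2 u t hu0 ht
  have hmul : u ^ t * u ^ (t - 1) = u ^ (2*t - 1) := by
    rw [← Real.rpow_add hu0]; ring_nf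
  calc t * (-Real.log u * u ^ (2*t - 1)) * (1 - u)
      = (u ^ t * -Real.log u) * (t * (u ^ (t - 1) * (1 - u))) := by rw [← hmul]; ring
    _ ≤ (u ^ t * -Real.log u) * (1 - u ^ t) :=
        mul_le_mul_of_nonneg_left key (mul_nonneg hxt hL)
    _ = u ^ t * -Real.log u * (1 - u ^ t) := rfl


lemma inner_t_integral (u x : ℝ) (hu : u ∈ Ioo (0:ℝ) 1) (hx : 1 ≤ x) :
    ∫ t in Ioo (1:ℝ) x, u ^ t * (-Real.log u) / (1 - u) = (u - u ^ x) / (1 - u) := by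
  have hu0 := hu.1
  have hu1 := hu.2
  have hlog : Real.log u ≠ 0 := (Real.log_neg hu0 hu1).ne
  have h1u : (1:ℝ) - u ≠ 0 := sub_ne_zero.mpr (by linarith : (1:ℝ) ≠ u)
  have hfun : (fun t : ℝ => u ^ t / Real.log u)
      = (fun t => Real.exp (Real.log u * t) / Real.log u) := by
    funext t; rw [Real.rpow_def_of_pos hu0]
  have hder : ∀ s : ℝ, HasDerivAt (fun t : ℝ => u ^ t / Real.log u) (u ^ s) s := by
    intro s
    have h1 : HasDerivAt (fun t : ℝ => Real.log u * t) (Real.log u) s := by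
      simpa using (hasDerivAt_id s).const_mul (Real.log u)
    have h2 := (Real.hasDerivAt_exp (Real.log u * s)).comp s h1
    have h3 := h2.div_const (Real.log u)
    have hval : Real.exp (Real.log u * s) * Real.log u / Real.log u = u ^ s := by
      rw [mul_div_assoc, div_self hlog, mul_one, ← Real.rpow_def_of_pos hu0]
    rw [hfun]
    rw [hval] at h3
    exact h3
  have hcont : Continuous (fun t : ℝ => u ^ t) := by
    have : (fun t : ℝ => u ^ t) = fun t => Real.exp (Real.log u * t) := by
      funext t; rw [Real.rpow_def_of_pos hu0]
    rw [this]
    exact Real.continuous_exp.comp (continuous_const.mul continuous_id)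
  have hint : ∫ t in (1:ℝ)..x, u ^ t = (u ^ x - u) / Real.log u := by
    rw [intervalIntegral.integral_eq_sub_of_hasDerivAt (fun s _ => hder s)
      (hcont.intervalIntegrable 1 x)]
    rw [Real.rpow_one]
    ring
  have hres : ∫ t in Ioo (1:ℝ) x, u ^ t * (-Real.log u) / (1 - u)
      = ∫ t in (1:ℝ)..x, u ^ t * ((-Real.log u) / (1 - u)) := by
    rw [intervalIntegral.integral_of_le hx, MeasureTheory.integral_Ioc_eq_integral_Ioo]
    apply setIntegral_congr_fun measurableSet_Ioo
    intro t _
    dsimp only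
    rw [mul_div_assoc]
  rw [hres, intervalIntegral.integral_mul_const, hint]
  field_simp
  ring

lemma c_nonneg : (0:ℝ) ≤ Real.pi ^ 2 / 6 - 1 := by
  nlinarith [Real.pi_gt_three]

lemma genHarmonic_ge (x : ℝ) (hx : 1 ≤ x) :
    genHarmonic x ≥ 1 + (Real.pi ^ 2 / 6 - 1) * Real.log x := by
  set c : ℝ := Real.pi ^ 2 / 6 - 1 with hc
  set f : ℝ → ℝ → ℝ := fun t u => u ^ t * (-Real.log u) / (1 - u) with hf
  set g : ℝ → ℝ → ℝ := fun t u => t * ((-Real.log u) * u ^ (2*t - 1) / (1 - u ^ t)) with hg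
  set μ : Measure ℝ := volume.restrict (Ioo 1 x) with hμ
  set ν : Measure ℝ := volume.restrict (Ioo 0 1) with hν
  haveI : IsFiniteMeasure μ := by
    constructor
    rw [hμ, Measure.restrict_apply_univ]
    exact measure_Ioo_lt_top
  haveI : IsFiniteMeasure ν := by
    constructor
    rw [hν, Measure.restrict_apply_univ]
    exact measure_Ioo_lt_top
  -- continuity of uncurried functions on the product box
  have hSmeas : MeasurableSet ((Ioo (1:ℝ) x) ×ˢ (Ioo (0:ℝ) 1)) :=
    measurableSet_Ioo.prod measurableSet_Ioo
  have hprod : μ.prod ν = (volume.prod volume).restrict ((Ioo (1:ℝ) x) ×ˢ (Ioo (0:ℝ) 1)) := by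
    rw [hμ, hν, Measure.prod_restrict]
  have hcontf : ContinuousOn (fun p : ℝ × ℝ => f p.1 p.2) ((Ioo (1:ℝ) x) ×ˢ (Ioo (0:ℝ) 1)) := by
    intro p hp
    have hp2 : p.2 ∈ Ioo (0:ℝ) 1 := hp.2
    apply ContinuousAt.continuousWithinAt
    have h1 : ContinuousAt (fun p : ℝ × ℝ => p.2 ^ p.1) p := by
      have h := Real.continuousAt_rpow (p.2, p.1) (Or.inl hp2.1.ne')
      exact ContinuousAt.comp (x := p) (f := fun q : ℝ × ℝ => (q.2, q.1)) h
        ((continuous_snd.prodMk continuous_fst).continuousAt)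
    have h2 : ContinuousAt (fun p : ℝ × ℝ => -Real.log p.2) p :=
      ((Real.continuousAt_log hp2.1.ne').comp continuous_snd.continuousAt).neg
    have h3 : ContinuousAt (fun p : ℝ × ℝ => 1 - p.2) p :=
      continuousAt_const.sub continuous_snd.continuousAt
    exact (h1.mul h2).div h3 (sub_ne_zero.mpr (by linarith [hp2.2] : (1:ℝ) ≠ p.2))
  have hcontg : ContinuousOn (fun p : ℝ × ℝ => g p.1 p.2) ((Ioo (1:ℝ) x) ×ˢ (Ioo (0:ℝ) 1)) := by
    intro p hp
    have hp1 : p.1 ∈ Ioo (1:ℝ) x := hp.1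
    have hp2 : p.2 ∈ Ioo (0:ℝ) 1 := hp.2
    apply ContinuousAt.continuousWithinAt
    have h1 : ContinuousAt (fun p : ℝ × ℝ => p.2 ^ (2 * p.1 - 1)) p := by
      have h := Real.continuousAt_rpow (p.2, 2 * p.1 - 1) (Or.inl hp2.1.ne')
      exact ContinuousAt.comp (x := p) (f := fun q : ℝ × ℝ => (q.2, 2 * q.1 - 1)) h
        ((continuous_snd.prodMk
          ((continuous_const.mul continuous_fst).sub continuous_const)).continuousAt)
    have h2 : ContinuousAt (fun p : ℝ × ℝ => -Real.log p.2) p :=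
      ((Real.continuousAt_log hp2.1.ne').comp continuous_snd.continuousAt).neg
    have h3 : ContinuousAt (fun p : ℝ × ℝ => 1 - p.2 ^ p.1) p := by
      have h4 : ContinuousAt (fun p : ℝ × ℝ => p.2 ^ p.1) p := by
        have h := Real.continuousAt_rpow (p.2, p.1) (Or.inl hp2.1.ne')
        exact ContinuousAt.comp (x := p) (f := fun q : ℝ × ℝ => (q.2, q.1)) h
          ((continuous_snd.prodMk continuous_fst).continuousAt)
      exact continuousAt_const.sub h4
    have h5 : (1:ℝ) - p.2 ^ p.1 ≠ 0 := by
      have := Real.rpow_lt_one hp2.1.le hp2.2 (by linarith [hp1.1] : (0:ℝ) < p.1)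
      linarith
    exact (continuous_fst.continuousAt).mul ((h2.mul h1).div h3 h5)
  -- integrability on the product
  have haef : ∀ᵐ p ∂(μ.prod ν), p ∈ (Ioo (1:ℝ) x) ×ˢ (Ioo (0:ℝ) 1) := by
    rw [hprod]
    exact ae_restrict_mem hSmeas
  have hInt_f : Integrable (Function.uncurry f) (μ.prod ν) := by
    apply Integrable.mono' (integrable_const (1:ℝ))
    · rw [hprod]
      exact hcontf.aestronglyMeasurable hSmeas
    · filter_upwards [haef] with p hp
      show ‖f p.1 p.2‖ ≤ 1
      rw [Real.norm_of_nonneg (f_nonneg p.1 p.2 hp.2)]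
      exact f_le_one p.1 p.2 hp.1.1.le hp.2
  have hInt_g : Integrable (Function.uncurry g) (μ.prod ν) := by
    apply Integrable.mono' (integrable_const (1:ℝ))
    · rw [hprod]
      exact hcontg.aestronglyMeasurable hSmeas
    · filter_upwards [haef] with p hp
      show ‖g p.1 p.2‖ ≤ 1
      rw [Real.norm_of_nonneg (g_nonneg p.1 p.2 hp.1.1.le hp.2)]
      exact le_trans (g_le_f p.1 p.2 hp.1.1.le hp.2) (f_le_one p.1 p.2 hp.1.1.le hp.2)
  -- genHarmonic as an integral over Ioo
  have hH : genHarmonic x = ∫ u in Ioo (0:ℝ) 1, (1 - u ^ x) / (1 - u) := by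
    rw [genHarmonic, intervalIntegral.integral_of_le (by norm_num : (0:ℝ) ≤ 1),
      MeasureTheory.integral_Ioc_eq_integral_Ioo]
  have hInt1 : Integrable (fun u : ℝ => (1 - u ^ x) / (1 - u)) ν := by
    apply Integrable.mono' (integrable_const x)
    · rw [hν]
      apply ContinuousOn.aestronglyMeasurable _ measurableSet_Ioo
      intro u hu
      apply ContinuousAt.continuousWithinAt
      have h1 : ContinuousAt (fun u : ℝ => u ^ x) u :=
        Real.continuousAt_rpow_const u x (Or.inl hu.1.ne')
      exact (continuousAt_const.sub h1).div (continuousAt_const.sub continuousAt_id)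
        (sub_ne_zero.mpr (by linarith [hu.2] : (1:ℝ) ≠ u))
    · rw [hν]; filter_upwards [ae_restrict_mem measurableSet_Ioo] with u hu
      have h3 : (0:ℝ) < 1 - u := by linarith [hu.2]
      have hnn : 0 ≤ (1 - u ^ x) / (1 - u) := by
        apply div_nonneg _ h3.le
        have := Real.rpow_le_one hu.1.le hu.2.le (by linarith : (0:ℝ) ≤ x)
        linarith
      rw [Real.norm_of_nonneg hnn, div_le_iff₀ h3]
      have hb := bern1 u x hu.1.le hx
      nlinarith
  have hsub : genHarmonic x - 1 = ∫ u in Ioo (0:ℝ) 1, (u - u ^ x) / (1 - u) := by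
    have hν1 : ∫ _u in Ioo (0:ℝ) 1, (1:ℝ) = 1 := by
      simp [Real.volume_Ioo]
    have h2 : (∫ u in Ioo (0:ℝ) 1, ((1 - u ^ x) / (1 - u) - 1))
        = (∫ u in Ioo (0:ℝ) 1, (1 - u ^ x) / (1 - u)) - ∫ _u in Ioo (0:ℝ) 1, (1:ℝ) :=
      MeasureTheory.integral_sub hInt1 (integrable_const 1)
    have h3 : (∫ u in Ioo (0:ℝ) 1, ((1 - u ^ x) / (1 - u) - 1))
        = ∫ u in Ioo (0:ℝ) 1, (u - u ^ x) / (1 - u) := by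
      apply setIntegral_congr_fun measurableSet_Ioo
      intro u hu
      have h4 : (1:ℝ) - u ≠ 0 := sub_ne_zero.mpr (by linarith [hu.2] : (1:ℝ) ≠ u)
      dsimp only
      field_simp
      ring
    rw [hH]
    linarith [h2, h3, hν1]
  have hiter : (∫ u in Ioo (0:ℝ) 1, (u - u ^ x) / (1 - u))
      = ∫ t in Ioo (1:ℝ) x, ∫ u in Ioo (0:ℝ) 1, f t u := by
    have h1 : (∫ u in Ioo (0:ℝ) 1, (u - u ^ x) / (1 - u))
        = ∫ u in Ioo (0:ℝ) 1, ∫ t in Ioo (1:ℝ) x, f t u := by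
      apply setIntegral_congr_fun measurableSet_Ioo
      intro u hu
      exact (inner_t_integral u x hu hx).symm
    rw [h1]
    exact MeasureTheory.integral_integral_swap (f := fun u t => f t u) hInt_f.swap
  -- slice integrability
  have hslice_f : ∀ t, 1 ≤ t → Integrable (fun u => f t u) ν := by
    intro t ht1
    apply Integrable.mono' (integrable_const (1:ℝ))
    · rw [hν]
      apply ContinuousOn.aestronglyMeasurable _ measurableSet_Ioo
      intro u hu
      apply ContinuousAt.continuousWithinAt
      have h1 : ContinuousAt (fun u : ℝ => u ^ t) u :=
        Real.continuousAt_rpow_const u t (Or.inl hu.1.ne')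
      have h2 : ContinuousAt (fun u : ℝ => -Real.log u) u :=
        (Real.continuousAt_log hu.1.ne').neg
      exact (h1.mul h2).div (continuousAt_const.sub continuousAt_id)
        (sub_ne_zero.mpr (by linarith [hu.2] : (1:ℝ) ≠ u))
    · rw [hν]; filter_upwards [ae_restrict_mem measurableSet_Ioo] with u hu
      rw [Real.norm_of_nonneg (f_nonneg t u hu)]
      exact f_le_one t u ht1 hu
  have hslice_g : ∀ t, 1 ≤ t → Integrable (fun u => g t u) ν := by
    intro t ht1
    apply Integrable.mono' (integrable_const (1:ℝ))
    · rw [hν]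
      apply ContinuousOn.aestronglyMeasurable _ measurableSet_Ioo
      intro u hu
      apply ContinuousAt.continuousWithinAt
      have h1 : ContinuousAt (fun u : ℝ => u ^ (2*t - 1)) u :=
        Real.continuousAt_rpow_const u _ (Or.inl hu.1.ne')
      have h2 : ContinuousAt (fun u : ℝ => -Real.log u) u :=
        (Real.continuousAt_log hu.1.ne').neg
      have h4 : ContinuousAt (fun u : ℝ => u ^ t) u :=
        Real.continuousAt_rpow_const u t (Or.inl hu.1.ne')
      have h5 : (1:ℝ) - u ^ t ≠ 0 := by
        have := Real.rpow_lt_one hu.1.le hu.2 (by linarith : (0:ℝ) < t)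
        linarith
      exact continuousAt_const.mul ((h2.mul h1).div (continuousAt_const.sub h4) h5)
    · rw [hν]; filter_upwards [ae_restrict_mem measurableSet_Ioo] with u hu
      rw [Real.norm_of_nonneg (g_nonneg t u ht1 hu)]
      exact le_trans (g_le_f t u ht1 hu) (f_le_one t u ht1 hu)
  have hkey : ∀ᵐ t ∂μ, c / t ≤ ∫ u, f t u ∂ν := by
    rw [hμ]
    filter_upwards [ae_restrict_mem measurableSet_Ioo] with t ht
    have ht1 : 1 ≤ t := ht.1.le
    have hle : (∫ u, g t u ∂ν) ≤ ∫ u, f t u ∂ν := by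
      apply integral_mono_ae (hslice_g t ht1) (hslice_f t ht1)
      rw [hν]
      filter_upwards [ae_restrict_mem measurableSet_Ioo] with u hu
      exact g_le_f t u ht1 hu
    have hev : (∫ u, g t u ∂ν) = c / t := by
      rw [hν, hc]
      exact Feval t ht1
    linarith
  have houter_f : Integrable (fun t => ∫ u, f t u ∂ν) μ :=
    hInt_f.integral_prod_left
  have houter_c : Integrable (fun t => c / t) μ := by
    apply Integrable.mono' (integrable_const c)
    · exact (measurable_const.div measurable_id).aestronglyMeasurable
    · rw [hμ]; filter_upwards [ae_restrict_mem measurableSet_Ioo] with t ht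
      rw [Real.norm_of_nonneg (div_nonneg c_nonneg (by linarith [ht.1] : (0:ℝ) ≤ t))]
      exact div_le_self c_nonneg ht.1.le
  have hmono := integral_mono_ae houter_c houter_f hkey
  have hclog : (∫ t in Ioo (1:ℝ) x, c / t) = c * Real.log x := by
    rw [← MeasureTheory.integral_Ioc_eq_integral_Ioo,
      ← intervalIntegral.integral_of_le hx]
    have hrw : ∀ t : ℝ, c / t = c * (1 / t) := by intro t; ring
    simp_rw [hrw]
    rw [intervalIntegral.integral_const_mul, integral_one_div]
    · rw [div_one]
    · rw [uIcc_of_le hx]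
      intro h
      have := h.1
      linarith
  have hfin : genHarmonic x - 1 ≥ c * Real.log x := by
    rw [hsub, hiter, ← hclog]
    exact hmono
  linarith

end GumbelAux

/-- Entropy lower bound for the Gumbel watermark score (Aaronson):
`H(x) ≥ 1 + (π²/6 − 1)·log x` for all `x ≥ 1`; consequently, for any probability
vector `P` with positive entries, `∑_w P(w)·H(1/P(w))` is at least `1` plus
`(π²/6 − 1)` times the Shannon entropy of `P`. -/
theorem gumbel_watermark_entropy_bound {V : Type*} [Fintype V] [Nonempty V]
    (P : V → ℝ) (hpos : ∀ w : V, 0 < P w) (hsum : ∑ w : V, P w = 1) :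
    (∀ x : ℝ, 1 ≤ x →
      genHarmonic x ≥ 1 + (Real.pi ^ 2 / 6 - 1) * Real.log x) ∧
    (∑ w : V, P w * genHarmonic (1 / P w)
      ≥ 1 + (Real.pi ^ 2 / 6 - 1) * ∑ w : V, P w * Real.log (1 / P w)) := by
  refine ⟨fun x hx => genHarmonic_ge x hx, ?_⟩
  have hle1 : ∀ w : V, P w ≤ 1 := by
    intro w
    have h := Finset.single_le_sum (f := P) (fun i _ => (hpos i).le) (Finset.mem_univ w)
    rw [hsum] at h
    exact h
  have hstep : ∀ w : V,
      P w * (1 + (Real.pi ^ 2 / 6 - 1) * Real.log (1 / P w))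
        ≤ P w * genHarmonic (1 / P w) := by
    intro w
    apply mul_le_mul_of_nonneg_left _ (hpos w).le
    have hx : 1 ≤ 1 / P w := by
      rw [le_div_iff₀ (hpos w)]
      simpa using hle1 w
    exact genHarmonic_ge _ hx
  have hexp : ∑ w : V, P w * (1 + (Real.pi ^ 2 / 6 - 1) * Real.log (1 / P w))
      = (∑ w : V, P w) + (Real.pi ^ 2 / 6 - 1) * ∑ w : V, P w * Real.log (1 / P w) := by
    rw [Finset.mul_sum, ← Finset.sum_add_distrib]
    apply Finset.sum_congr rfl
    intro w _
    ring
  rw [hsum] at hexp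
  rw [ge_iff_le, ← hexp]
  exact Finset.sum_le_sum (fun w _ => hstep w)
end
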